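/- arXiv:1606.06318 — 7 statements merged into one kernel-verified Lean document; each statement's English description precedes it below -/
import Mathlib

section
/- Let ρ > 0, c > 0, x₀ ≥ 0, b₀ > 0, and let F : ℝ → ℝ be continuously differentiable with F(0) = 0 and −b₀ ≤ F'(y) ≤ 0 for all y ∈ ℝ. Then for every admissible control u and every trajectory x associated with u such that t ↦ e^{-ρt}(log u(t) − c·x(t)²) is Lebesgue integrable on [0,∞), one has B(u,x) ≤ (1/ρ)·log((ρ + b₀)/√(2ec)). In particular the value function V(x₀) = sup B(u,x) satisfies V(x₀) ≤ (1/ρ)·log((ρ + b₀)/√(2ec)). -/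
/-!
Since `F` is antitone with `F 0 = 0` and `u > 0`, the state never becomes negative, and then
`F y ≥ -b₀ y` gives `u ≤ ẋ + b₀ x`. Fix `c' < c` and `A = (ρ + b₀)/√(2c')`. The tangent-line bound
`log u ≤ log A + u/A - 1` together with `√(2c') x - c' x² ≤ 1/2` yields
`e^{-ρt}(log u - c'x²) ≤ e^{-ρt}(ẋ - ρx)/A + M e^{-ρt}` with `M = log((ρ+b₀)/√(2ec'))`, and
`e^{-ρt}(ẋ - ρx)` integrates to the boundary term `e^{-ρT}x(T) - x₀`. The slack
`(c - c') ∫₀^T e^{-ρt}x²` absorbs that boundary term along a sequence `T → ∞`: otherwise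
`P = K ∫₀^T e^{-ρt}x² + ε` would satisfy the Riccati inequality `P' ≥ K P²` and blow up in finite
time. So `B(u,x) ≤ M/ρ` for every `c' < c`, and `c' → c` gives the claim.
-/

open MeasureTheory Filter

/-- A control `u` is admissible: measurable, locally integrable on `[0,∞)`,
and positive almost everywhere on `[0,∞)`. -/
def Admissible (u : ℝ → ℝ) : Prop :=
  Measurable u ∧ (∀ T : ℝ, 0 < T → IntegrableOn u (Set.Icc 0 T)) ∧
    (∀ᵐ t ∂(volume.restrict (Set.Ici (0:ℝ))), 0 < u t)

/-- `x` is a trajectory associated with the control `u`, dynamics `F` and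
initial state `x₀`. -/
def Trajectory (F : ℝ → ℝ) (x₀ : ℝ) (u x : ℝ → ℝ) : Prop :=
  ContinuousOn x (Set.Ici 0) ∧
    ∀ t : ℝ, 0 ≤ t → x t = x₀ + ∫ s in (0:ℝ)..t, (F (x s) + u s)

/-- The objective functional `B(u,x) = ∫₀^∞ e^{-ρt}(log u(t) - c x(t)²) dt`. -/
noncomputable def objective (ρ c : ℝ) (u x : ℝ → ℝ) : ℝ :=
  ∫ t in Set.Ioi (0:ℝ), Real.exp (-ρ * t) * (Real.log (u t) - c * (x t) ^ 2)

/-- Integrability of the integrand of the objective functional. -/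
def ObjIntegrable (ρ c : ℝ) (u x : ℝ → ℝ) : Prop :=
  IntegrableOn (fun t => Real.exp (-ρ * t) * (Real.log (u t) - c * (x t) ^ 2))
    (Set.Ioi (0:ℝ))

open Set Real intervalIntegral Topology

theorem log_div_sqrt_sub_half {r c : ℝ} (hr : 0 < r) (hc : 0 < c) :
    log (r / √(2 * c)) - 1 / 2 = log (r / √(2 * exp 1 * c)) := by
  have hsplit : √(2 * exp 1 * c) = √(2 * c) * √(exp 1) := by
    rw [← sqrt_mul (by positivity)]; ring_nf
  rw [hsplit, ← div_div, log_div (x := r / √(2 * c)) (by positivity) (by positivity),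
    log_sqrt (exp_pos 1).le, log_exp]

theorem log_sub_mul_sq_le {a v y ρ b c : ℝ} (ha : 0 < a) (hc : 0 < c) (hρb : 0 < ρ + b)
    (hav : a ≤ v + b * y) :
    log a - c * y ^ 2 ≤ (v - ρ * y) / ((ρ + b) / √(2 * c)) + log ((ρ + b) / √(2 * exp 1 * c)) := by
  set A := (ρ + b) / √(2 * c)
  have hA : 0 < A := by positivity
  have hlog : log a ≤ log A + a / A - 1 := by
    have := log_le_sub_one_of_pos (div_pos ha hA)
    rw [log_div ha.ne' hA.ne'] at this
    linarith
  have hslope : (ρ + b) / A = √(2 * c) := by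
    simp only [A]; field_simp
  -- `(ρ + b)/A = √(2c)` makes `√(2c) y` the tangent line of `c y² + 1/2` at `y = 1/√(2c)`.
  have hquad : (ρ + b) / A * y - c * y ^ 2 ≤ 1 / 2 := by
    rw [hslope]
    nlinarith [sq_nonneg (√(2 * c) * y - 1), sq_sqrt (by positivity : (0:ℝ) ≤ 2 * c)]
  have hsplit : (v + b * y) / A = (v - ρ * y) / A + (ρ + b) / A * y := by ring
  have hav' : a / A ≤ (v + b * y) / A := div_le_div_of_nonneg_right hav hA.le
  rw [← log_div_sqrt_sub_half hρb hc]
  linarith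

theorem integral_exp_neg_mul {ρ : ℝ} (hρ : ρ ≠ 0) (T : ℝ) :
    ∫ t in 0..T, exp (-ρ * t) = (1 - exp (-ρ * T)) / ρ := by
  rw [integral_comp_mul_left (fun t => exp t) (neg_ne_zero.2 hρ), integral_exp]
  simp only [mul_zero, smul_eq_mul, exp_zero, neg_mul]
  field_simp
  ring

theorem integral_exp_neg_mul_mul_sub {w x : ℝ → ℝ} {a b : ℝ} (ρ : ℝ)
    (hw : IntervalIntegrable w volume a b)
    (hx : ∀ t ∈ uIcc a b, x t = x a + ∫ s in a..t, w s) :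
    ∫ t in a..b, exp (-ρ * t) * (w t - ρ * x t) = exp (-ρ * b) * x b - exp (-ρ * a) * x a := by
  set X : ℝ → ℝ := fun t => x a + ∫ s in a..t, w s
  have hXac : AbsolutelyContinuousOnInterval X a b :=
    contDiffOn_const.absolutelyContinuousOnInterval.add
      (hw.absolutelyContinuousOnInterval_intervalIntegral left_mem_uIcc)
  have hEac : AbsolutelyContinuousOnInterval (fun t => exp (-ρ * t)) a b :=
    (by fun_prop : ContDiff ℝ 1 fun t => exp (-ρ * t)).contDiffOn.absolutelyContinuousOnInterval
  calc ∫ t in a..b, exp (-ρ * t) * (w t - ρ * x t)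
      = ∫ t in a..b, deriv (fun t => exp (-ρ * t)) t * X t + exp (-ρ * t) * deriv X t := by
        refine integral_congr_ae ?_
        filter_upwards [hw.ae_hasDerivAt_integral] with t ht htab
        have htab' := uIoc_subset_uIcc htab
        have hX : HasDerivAt X (w t) t := (ht htab' a left_mem_uIcc).const_add _
        have hE : HasDerivAt (fun t => exp (-ρ * t)) (exp (-ρ * t) * (-ρ)) t := by
          simpa using ((hasDerivAt_id' t).const_mul (-ρ)).exp
        rw [hX.deriv, hE.deriv, hx t htab']
        ring
    _ = exp (-ρ * b) * X b - exp (-ρ * a) * X a := hEac.integral_deriv_mul_eq_sub hXac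
    _ = exp (-ρ * b) * x b - exp (-ρ * a) * x a := by
        simp only [X, integral_same, add_zero, ← hx b right_mem_uIcc]

/-- `1/P + kT` is antitone, so the positive quantity `1/P` would become negative after time
`1/(k P T₀)`. -/
theorem false_of_sq_le_deriv {P P' : ℝ → ℝ} {k T₀ : ℝ} (hk : 0 < k)
    (hP : ∀ T ≥ T₀, HasDerivAt P (P' T) T) (hpos : ∀ T ≥ T₀, 0 < P T)
    (hP' : ∀ T ≥ T₀, k * P T ^ 2 ≤ P' T) : False := by
  have hderiv : ∀ T ≥ T₀, HasDerivAt (fun T => (P T)⁻¹ + k * T) (-P' T / P T ^ 2 + k * 1) T :=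
    fun T hT => ((hP T hT).inv (hpos T hT).ne').add ((hasDerivAt_id' T).const_mul k)
  have hanti : AntitoneOn (fun T => (P T)⁻¹ + k * T) (Ici T₀) := by
    refine antitoneOn_of_hasDerivWithinAt_nonpos (convex_Ici T₀)
      (fun T hT => (hderiv T hT).continuousAt.continuousWithinAt)
      (fun T hT => (hderiv T (interior_subset hT)).hasDerivWithinAt) (fun T hT => ?_)
    have hT : T₀ ≤ T := interior_subset hT
    have hPT := hpos T hT
    rw [mul_one, div_add' _ _ _ (by positivity), div_nonpos_iff]
    exact Or.inr ⟨by linarith [hP' T hT], by positivity⟩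
  set T := T₀ + (P T₀)⁻¹ / k
  have hT : T₀ ≤ T := le_add_of_nonneg_right (by have := hpos T₀ le_rfl; positivity)
  have hmono := hanti self_mem_Ici hT hT
  have : k * T = k * T₀ + (P T₀)⁻¹ := by simp only [T]; field_simp
  have := inv_pos.2 (hpos T hT)
  simp only at hmono
  linarith

theorem frequently_exp_neg_mul_lt {x : ℝ → ℝ} {ρ K ε : ℝ} (hρ : 0 < ρ) (hK : 0 < K)
    (hε : 0 < ε) (hx : ContinuousOn x (Ici 0)) :
    ∃ᶠ T in atTop, exp (-ρ * T) * x T < K * (∫ t in 0..T, exp (-ρ * t) * x t ^ 2) + ε := by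
  set g : ℝ → ℝ := fun t => exp (-ρ * t) * x t ^ 2
  have hg : ContinuousOn g (Ici 0) := by fun_prop
  have hderiv : ∀ T > 0, HasDerivAt (fun T => K * (∫ t in 0..T, g t) + ε) (K * g T) T := by
    intro T hT
    have hgT : ContinuousAt g T := hg.continuousAt (Ici_mem_nhds hT)
    refine ((integral_hasDerivAt_right ?_ ?_ hgT).const_mul K).add_const ε
    · exact (hg.mono (by simp [uIcc_of_le hT.le, Icc_subset_Ici_self])).intervalIntegrable
    · exact (hg.mono Ioi_subset_Ici_self).stronglyMeasurableAtFilter isOpen_Ioi T hT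
  have hq : ∀ T ≥ 0, 0 ≤ ∫ t in 0..T, g t := fun T hT =>
    integral_nonneg hT fun t _ => by positivity
  by_contra h
  rw [not_frequently] at h
  obtain ⟨T₀, hT₀⟩ := eventually_atTop.1 (h.and (eventually_gt_atTop 0))
  refine false_of_sq_le_deriv hK (fun T hT => hderiv T (hT₀ T hT).2) (fun T hT => ?_)
    (fun T hT => ?_)
  · have := hq T (hT₀ T hT).2.le
    positivity
  · obtain ⟨hle, hT⟩ := hT₀ T hT
    rw [not_lt] at hle
    have hP : 0 ≤ K * (∫ t in 0..T, g t) + ε := by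
      have := hq T hT.le
      positivity
    have hsq : (exp (-ρ * T) * x T) ^ 2 ≤ g T := by
      have : exp (-ρ * T) ≤ 1 := exp_le_one_iff.2 (by nlinarith)
      calc (exp (-ρ * T) * x T) ^ 2 = exp (-ρ * T) * g T := by ring
        _ ≤ 1 * g T := by gcongr
        _ = g T := one_mul _
    gcongr
    exact (pow_le_pow_left₀ hP hle 2).trans hsq

theorem integral_discounted_reward_le {u w x : ℝ → ℝ} {ρ b c c' T : ℝ} (hρ : 0 < ρ)
    (hb : 0 ≤ b) (hc' : 0 < c') (hT : 0 ≤ T) (hw : IntervalIntegrable w volume 0 T)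
    (hx : ∀ t ∈ Icc 0 T, x t = x 0 + ∫ s in 0..t, w s) (hxc : ContinuousOn x (Icc 0 T))
    (hu : ∀ᵐ t ∂volume.restrict (Icc 0 T), 0 < u t ∧ u t ≤ w t + b * x t)
    (hint : IntervalIntegrable (fun t => exp (-ρ * t) * (log (u t) - c * x t ^ 2)) volume 0 T) :
    ∫ t in 0..T, exp (-ρ * t) * (log (u t) - c * x t ^ 2) ≤
      (exp (-ρ * T) * x T - x 0) / ((ρ + b) / √(2 * c')) +
        log ((ρ + b) / √(2 * exp 1 * c')) * ((1 - exp (-ρ * T)) / ρ) -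
          (c - c') * ∫ t in 0..T, exp (-ρ * t) * x t ^ 2 := by
  set A := (ρ + b) / √(2 * c')
  set M := log ((ρ + b) / √(2 * exp 1 * c'))
  have hxc' : ContinuousOn x (uIcc 0 T) := by rwa [uIcc_of_le hT]
  have hEw : IntervalIntegrable (fun t => exp (-ρ * t) * (w t - ρ * x t)) volume 0 T :=
    (hw.sub (hxc'.intervalIntegrable.const_mul ρ)).continuousOn_mul (by fun_prop)
  have hE : IntervalIntegrable (fun t => exp (-ρ * t)) volume 0 T :=
    (by fun_prop : Continuous fun t => exp (-ρ * t)).intervalIntegrable _ _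
  have hEx : IntervalIntegrable (fun t => exp (-ρ * t) * x t ^ 2) volume 0 T :=
    ContinuousOn.intervalIntegrable (by fun_prop)
  have hpointwise : ∀ᵐ t ∂volume.restrict (Icc 0 T),
      exp (-ρ * t) * (log (u t) - c * x t ^ 2) ≤
        A⁻¹ * (exp (-ρ * t) * (w t - ρ * x t)) + M * exp (-ρ * t) -
          (c - c') * (exp (-ρ * t) * x t ^ 2) := by
    filter_upwards [hu] with t ⟨hut, hutw⟩
    have := log_sub_mul_sq_le (ρ := ρ) hut hc' (by linarith) hutw
    calc exp (-ρ * t) * (log (u t) - c * x t ^ 2)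
        = exp (-ρ * t) * (log (u t) - c' * x t ^ 2) - (c - c') * (exp (-ρ * t) * x t ^ 2) := by
          ring
      _ ≤ exp (-ρ * t) * ((w t - ρ * x t) / A + M) - (c - c') * (exp (-ρ * t) * x t ^ 2) := by
          gcongr
      _ = _ := by ring
  refine (integral_mono_ae_restrict hT hint
    (((hEw.const_mul _).add (hE.const_mul _)).sub (hEx.const_mul _)) hpointwise).trans_eq ?_
  rw [integral_sub ((hEw.const_mul _).add (hE.const_mul _)) (hEx.const_mul _),
    integral_add (hEw.const_mul _) (hE.const_mul _), intervalIntegral.integral_const_mul,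
    intervalIntegral.integral_const_mul, intervalIntegral.integral_const_mul,
    integral_exp_neg_mul hρ.ne',
    integral_exp_neg_mul_mul_sub ρ hw (fun t ht => hx t (by rwa [uIcc_of_le hT] at ht))]
  simp only [mul_zero, exp_zero, one_mul]
  ring

theorem objective_le_log_of_lt {u w x : ℝ → ℝ} {ρ b c c' : ℝ} (hρ : 0 < ρ) (hb : 0 ≤ b)
    (hc' : 0 < c') (hcc' : c' < c) (hw : ∀ T ≥ 0, IntervalIntegrable w volume 0 T)
    (hx : ∀ t ≥ 0, x t = x 0 + ∫ s in 0..t, w s) (hx0 : 0 ≤ x 0)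
    (hxc : ContinuousOn x (Ici 0))
    (hu : ∀ᵐ t ∂volume.restrict (Ici 0), 0 < u t ∧ u t ≤ w t + b * x t)
    (hint : ObjIntegrable ρ c u x) :
    objective ρ c u x ≤ log ((ρ + b) / √(2 * exp 1 * c')) / ρ := by
  set A := (ρ + b) / √(2 * c')
  set M := log ((ρ + b) / √(2 * exp 1 * c'))
  have hA : 0 < A := by positivity
  have hhorizon : ∀ T ≥ 0, ∫ t in 0..T, exp (-ρ * t) * (log (u t) - c * x t ^ 2) ≤
      (exp (-ρ * T) * x T - x 0) / A + M * ((1 - exp (-ρ * T)) / ρ) -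
        (c - c') * ∫ t in 0..T, exp (-ρ * t) * x t ^ 2 := fun T hT =>
    integral_discounted_reward_le hρ hb hc' hT (hw T hT) (fun t ht => hx t ht.1)
      (hxc.mono Icc_subset_Ici_self) (ae_restrict_of_ae_restrict_of_subset Icc_subset_Ici_self hu)
      (by rw [intervalIntegrable_iff_integrableOn_Ioc_of_le hT]
          exact hint.mono_set Ioc_subset_Ioi_self)
  have hreward : Tendsto (fun T => ∫ t in 0..T, exp (-ρ * t) * (log (u t) - c * x t ^ 2))
      atTop (𝓝 (objective ρ c u x)) :=
    intervalIntegral_tendsto_integral_Ioi 0 hint tendsto_id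
  have hdiscount : Tendsto (fun T => M * ((1 - exp (-ρ * T)) / ρ)) atTop (𝓝 (M / ρ)) := by
    simpa [div_eq_mul_inv] using
      (((tendsto_const_nhds (x := (1 : ℝ))).sub (tendsto_exp_comp_nhds_zero.2
        (tendsto_id.const_mul_atTop_of_neg (neg_neg_of_pos hρ)))).div_const ρ).const_mul M
  refine le_of_forall_pos_le_add fun ε hε => ?_
  have hε3 : 0 < ε / 3 := by positivity
  have hclose : ∀ᶠ T in atTop,
      objective ρ c u x - ε / 3 ≤ ∫ t in 0..T, exp (-ρ * t) * (log (u t) - c * x t ^ 2) ∧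
        M * ((1 - exp (-ρ * T)) / ρ) ≤ M / ρ + ε / 3 ∧ 0 ≤ T :=
    (hreward.eventually (eventually_ge_nhds (sub_lt_self _ hε3))).and
      ((hdiscount.eventually (eventually_le_nhds (lt_add_of_pos_right _ hε3))).and
        (eventually_ge_atTop 0))
  obtain ⟨T, ⟨hT₁, hT₂, hT₃⟩, hT₄⟩ := (hclose.and_frequently
    (frequently_exp_neg_mul_lt hρ (by nlinarith : 0 < (c - c') * A)
      (by positivity : 0 < A * (ε / 3)) hxc)).exists
  have hboundary : (exp (-ρ * T) * x T - x 0) / A ≤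
      (c - c') * (∫ t in 0..T, exp (-ρ * t) * x t ^ 2) + ε / 3 := by
    rw [div_le_iff₀ hA]
    nlinarith
  linarith [hhorizon T hT₃]

theorem nonneg_of_le_of_nonpos_on_Ioc {x : ℝ → ℝ} {a : ℝ} (hx : ContinuousOn x (Ici a))
    (ha : 0 ≤ x a) (hle : ∀ s t, a ≤ s → s ≤ t → (∀ r ∈ Ioc s t, x r ≤ 0) → x s ≤ x t) :
    ∀ t ≥ a, 0 ≤ x t := by
  intro t ht
  by_contra! hneg
  set S := Icc a t ∩ x ⁻¹' Ici 0
  have hS : IsCompact S := isCompact_Icc.of_isClosed_subset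
    ((hx.mono Icc_subset_Ici_self).preimage_isClosed_of_isClosed isClosed_Icc isClosed_Ici)
    inter_subset_left
  obtain ⟨⟨has, hst⟩, hxs⟩ : sSup S ∈ S := hS.sSup_mem ⟨a, ⟨le_rfl, ht⟩, ha⟩
  have hafter : ∀ r ∈ Ioc (sSup S) t, x r ≤ 0 := fun r hr => by
    by_contra! hxr
    exact (le_csSup hS.bddAbove ⟨⟨has.trans hr.1.le, hr.2⟩, hxr.le⟩).not_gt hr.1
  have : 0 ≤ x (sSup S) := hxs
  linarith [hle _ t has hst hafter]

theorem intervalIntegrable_drift {F u x : ℝ → ℝ} (hF : Continuous F)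
    (hx : ContinuousOn x (Ici 0)) (hu : ∀ T : ℝ, 0 < T → IntegrableOn u (Icc 0 T)) :
    ∀ T ≥ 0, IntervalIntegrable (fun s => F (x s) + u s) volume 0 T := by
  intro T hT
  rcases hT.eq_or_lt with rfl | hT
  · exact IntervalIntegrable.refl
  rw [intervalIntegrable_iff_integrableOn_Icc_of_le hT.le]
  exact ((hF.comp_continuousOn (hx.mono Icc_subset_Ici_self)).integrableOn_compact
    isCompact_Icc).add (hu T hT)

theorem Trajectory.sub_eq_integral {F u x : ℝ → ℝ} {x₀ : ℝ} (hx : Trajectory F x₀ u x)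
    (hw : ∀ T ≥ 0, IntervalIntegrable (fun s => F (x s) + u s) volume 0 T) {s t : ℝ}
    (hs : 0 ≤ s) (ht : 0 ≤ t) : x t - x s = ∫ r in s..t, (F (x r) + u r) := by
  rw [hx.2 t ht, hx.2 s hs, add_sub_add_left_eq_sub,
    integral_interval_sub_left (hw t ht) (hw s hs)]

theorem Trajectory.nonneg {F u x : ℝ → ℝ} {x₀ : ℝ} (hx : Trajectory F x₀ u x) (hx₀ : 0 ≤ x₀)
    (hF : Antitone F) (hF0 : F 0 = 0) (hu : ∀ᵐ t ∂volume.restrict (Ici 0), 0 < u t)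
    (hw : ∀ T ≥ 0, IntervalIntegrable (fun s => F (x s) + u s) volume 0 T) :
    ∀ t ≥ 0, 0 ≤ x t := by
  refine nonneg_of_le_of_nonpos_on_Ioc hx.1 (by simpa [hx.2 0 le_rfl] using hx₀)
    fun s t hs hst hnonpos => ?_
  rw [← sub_nonneg, hx.sub_eq_integral hw hs (hs.trans hst), integral_of_le hst]
  refine setIntegral_nonneg_of_ae_restrict ?_
  filter_upwards [ae_restrict_of_ae_restrict_of_subset (fun r hr => hs.trans hr.1.le) hu,
    ae_restrict_mem measurableSet_Ioc] with r hur hr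
  have : 0 ≤ F (x r) := hF0 ▸ hF (hnonpos r hr)
  exact (add_pos_of_nonneg_of_pos this hur).le

theorem value_function_bounded_general
    (ρ c x₀ b₀ : ℝ) (F : ℝ → ℝ)
    (hρ : 0 < ρ) (hc : 0 < c) (hx₀ : 0 ≤ x₀)
    (hF : ContDiff ℝ 1 F) (hF0 : F 0 = 0)
    (hF' : ∀ y : ℝ, -b₀ ≤ deriv F y ∧ deriv F y ≤ 0) :
    ∀ u x : ℝ → ℝ, Admissible u → Trajectory F x₀ u x → ObjIntegrable ρ c u x →
      objective ρ c u x ≤ (1 / ρ) * Real.log ((ρ + b₀) / Real.sqrt (2 * Real.exp 1 * c)) := by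
  intro u x ⟨_, huloc, hupos⟩ hx hint
  have hb₀ : 0 ≤ b₀ := by linarith [hF' 0]
  have hFd : Differentiable ℝ F := hF.differentiable one_ne_zero
  have hw := intervalIntegrable_drift hF.continuous hx.1 huloc
  have hxnn := hx.nonneg hx₀ (antitone_of_deriv_nonpos hFd fun y => (hF' y).2) hF0 hupos hw
  have hx0 : x 0 = x₀ := by simpa using hx.2 0 le_rfl
  have hdrift : ∀ᵐ t ∂volume.restrict (Ici 0), 0 < u t ∧ u t ≤ F (x t) + u t + b₀ * x t := by
    filter_upwards [hupos, ae_restrict_mem measurableSet_Ici] with t hut ht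
    have := mul_sub_le_image_sub_of_le_deriv hFd (fun y => (hF' y).1) (hxnn t ht)
    rw [hF0] at this
    exact ⟨hut, by linarith⟩
  have hbound : ∀ c' ∈ Ioo 0 c, objective ρ c u x ≤ log ((ρ + b₀) / √(2 * exp 1 * c')) / ρ :=
    fun c' hc' => objective_le_log_of_lt hρ hb₀ hc'.1 hc'.2 hw (fun t ht => hx0 ▸ hx.2 t ht)
      (hx0 ▸ hx₀) hx.1 hdrift hint
  have hcont : ContinuousAt (fun c' => log ((ρ + b₀) / √(2 * exp 1 * c')) / ρ) c := by
    fun_prop (disch := positivity)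
  rw [one_div_mul_eq_div]
  exact ge_of_tendsto (hcont.tendsto.mono_left nhdsWithin_le_nhds)
    (eventually_of_mem (Ioo_mem_nhdsLT hc) hbound)

/-- Boundedness of the value function: every admissible pair has objective value
at most `(1/ρ) log((ρ+b₀)/√(2ec))`; in particular the value function satisfies
the same bound. -/
theorem value_function_bounded
    (ρ c x₀ b₀ : ℝ) (F : ℝ → ℝ)
    (hρ : 0 < ρ) (hc : 0 < c) (hx₀ : 0 ≤ x₀) (hb₀ : 0 < b₀)
    (hF : ContDiff ℝ 1 F) (hF0 : F 0 = 0)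
    (hF' : ∀ y : ℝ, -b₀ ≤ deriv F y ∧ deriv F y ≤ 0) :
    ∀ u x : ℝ → ℝ, Admissible u → Trajectory F x₀ u x → ObjIntegrable ρ c u x →
      objective ρ c u x ≤ (1 / ρ) * Real.log ((ρ + b₀) / Real.sqrt (2 * Real.exp 1 * c)) :=
  value_function_bounded_general ρ c x₀ b₀ F hρ hc hx₀ hF hF0 hF'
end

section
/- Let b₀ > 0 and for each T ≥ 0 let β_T denote the unique positive solution of log β + b₀·β = −T·b₀. Then β_T is asymptotic to e^{-T·b₀} as T → +∞; that is, lim_{T→+∞} β_T · e^{T·b₀} = 1. -/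
open Filter Topology Real

/-!
Exponentiating the defining equation gives `β_T e^{T b₀} = e^{-b₀ β_T}`, and since the equation
also forces `0 < β_T ≤ e^{-T b₀}`, the right-hand side tends to `e⁰ = 1`.
-/

lemma mul_exp_eq_exp_neg_of_log_add_mul_eq {b t x : ℝ} (hx : 0 < x)
    (h : log x + b * x = -t * b) : x * exp (t * b) = exp (-(b * x)) := by
  rw [← exp_log hx, ← exp_add, exp_log hx]
  congr 1
  linarith

lemma le_exp_of_log_add_mul_eq {b t x : ℝ} (hb : 0 ≤ b) (hx : 0 < x)
    (h : log x + b * x = -t * b) : x ≤ exp (-t * b) :=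
  calc x = exp (log x) := (exp_log hx).symm
    _ ≤ exp (-t * b) := exp_le_exp.mpr (by nlinarith)

lemma tendsto_zero_of_log_add_mul_eq {b : ℝ} (hb : 0 < b) {β : ℝ → ℝ}
    (hβ : ∀ᶠ t in atTop, 0 < β t ∧ log (β t) + b * β t = -t * b) :
    Tendsto β atTop (𝓝 0) := by
  have hexp : Tendsto (fun t : ℝ => exp (-t * b)) atTop (𝓝 0) :=
    tendsto_exp_atBot.comp (tendsto_neg_atTop_atBot.atBot_mul_const hb)
  refine tendsto_of_tendsto_of_tendsto_of_le_of_le' tendsto_const_nhds hexp ?_ ?_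
  · filter_upwards [hβ] with t ht using ht.1.le
  · filter_upwards [hβ] with t ht using le_exp_of_log_add_mul_eq hb.le ht.1 ht.2

/-- `β_T ~ e^{-T b₀}` as `T → +∞`, i.e. `β_T e^{T b₀} → 1`. -/
theorem beta_asymptotic (b₀ : ℝ) (hb₀ : 0 < b₀) (β : ℝ → ℝ)
    (hβ : ∀ T : ℝ, 0 ≤ T → 0 < β T ∧ Real.log (β T) + b₀ * β T = -T * b₀) :
    Tendsto (fun T => β T * Real.exp (T * b₀)) atTop (nhds 1) := by
  have hβ' : ∀ᶠ T in atTop, 0 < β T ∧ log (β T) + b₀ * β T = -T * b₀ :=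
    (eventually_ge_atTop 0).mono hβ
  have hlim : Tendsto (fun T => exp (-(b₀ * β T))) atTop (𝓝 1) := by
    simpa using ((tendsto_zero_of_log_add_mul_eq hb₀ hβ').const_mul b₀).neg.rexp
  refine hlim.congr' ?_
  filter_upwards [hβ'] with T hT
  exact (mul_exp_eq_exp_neg_of_log_add_mul_eq hT.1 hT.2).symm
end

section
/- Let b₀ > 0 and let F : ℝ → ℝ be Lipschitz continuous with Lipschitz constant b₀. Let x₀ ∈ ℝ, let v_n (n ∈ ℕ) and v be locally integrable functions on [0,∞), and suppose: (i) for every T > 0 and every bounded measurable g : [0,T] → ℝ, ∫₀^T v_n(t) g(t) dt → ∫₀^T v(t) g(t) dt as n → ∞; (ii) for every T ∈ ℕ there exists N_T > 0 such that 0 ≤ v_n(t) ≤ N_T for a.e. t ∈ [0,T] and all n ≥ T, and 0 ≤ v(t) ≤ N_T for a.e. t ∈ [0,T]. Let x_n and x be continuous functions on [0,∞) satisfying x_n(t) = x₀ + ∫₀^t (F(x_n(s)) + v_n(s)) ds and x(t) = x₀ + ∫₀^t (F(x(s)) + v(s)) ds for all t ≥ 0. Then x_n(t) → x(t) as n → ∞,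 for every t ≥ 0. -/
/-!
The error `φₙ = |xₙ - x|` satisfies `φₙ(u) ≤ b₀ ∫₀ᵘ φₙ + |Wₙ(u)|` with `Wₙ(u) = ∫₀ᵘ (vₙ - v)`, so
Grönwall's inequality bounds `φₙ(t)` by `|Wₙ(t)| + b₀ e^{b₀ t} ∫₀ᵗ |Wₙ|`. Testing the weak
convergence against `g = 1` gives `Wₙ(u) → 0` for every `u`, and the uniform bound on the controls
bounds `|Wₙ|` on `[0, t]` by `N t` for large `n`, so `∫₀ᵗ |Wₙ| → 0` by dominated convergence.
-/

open MeasureTheory Filter Set Topology Interval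

section Gronwall

variable {K T : ℝ} {φ ω : ℝ → ℝ}

lemma hasDerivAt_integral_of_continuousOn_Icc {f : ℝ → ℝ} {a b u : ℝ}
    (hf : ContinuousOn f (Icc a b)) (hu : u ∈ Ioo a b) :
    HasDerivAt (fun r => ∫ s in a..r, f s) (f u) u :=
  intervalIntegral.integral_hasDerivAt_right
    (hf.mono (uIcc_of_le hu.1.le ▸ Icc_subset_Icc_right hu.2.le)).intervalIntegrable
    ((hf.mono Ioo_subset_Icc_self).stronglyMeasurableAtFilter isOpen_Ioo u hu)
    (hf.continuousAt (Icc_mem_nhds hu.1 hu.2))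

lemma continuousOn_integral_Icc {f : ℝ → ℝ} {a b : ℝ} (hab : a ≤ b)
    (hf : IntervalIntegrable f volume a b) :
    ContinuousOn (fun r => ∫ s in a..r, f s) (Icc a b) := by
  simpa only [uIcc_of_le hab] using
    intervalIntegral.continuousOn_primitive_interval' hf left_mem_uIcc

lemma integral_le_exp_mul_integral_of_le_mul_integral_add (hK : 0 ≤ K) (hT : 0 ≤ T)
    (hφ : ContinuousOn φ (Icc 0 T)) (hω : ContinuousOn ω (Icc 0 T))
    (hω₀ : ∀ u ∈ Icc 0 T, 0 ≤ ω u)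
    (h : ∀ u ∈ Icc 0 T, φ u ≤ K * (∫ s in (0:ℝ)..u, φ s) + ω u) :
    ∫ s in (0:ℝ)..T, φ s ≤ Real.exp (K * T) * ∫ s in (0:ℝ)..T, ω s := by
  set Φ : ℝ → ℝ := fun u => ∫ s in (0:ℝ)..u, φ s
  set Ω : ℝ → ℝ := fun u => ∫ s in (0:ℝ)..u, ω s
  -- `Ω - e^{-Ku} Φ` has derivative `ω - e^{-Ku} (φ - K Φ) ≥ ω - e^{-Ku} ω ≥ 0`.
  have hderiv : ∀ u ∈ Ioo 0 T, HasDerivAt (fun u => Ω u - Real.exp (-(K * u)) * Φ u)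
      (ω u - (Real.exp (-(K * u)) * -K * Φ u + Real.exp (-(K * u)) * φ u)) u := fun u hu =>
    (hasDerivAt_integral_of_continuousOn_Icc hω hu).sub
      ((((hasDerivAt_id u).const_mul K).neg.exp.congr_deriv (by simp)).mul
        (hasDerivAt_integral_of_continuousOn_Icc hφ hu))
  have hmono : MonotoneOn (fun u => Ω u - Real.exp (-(K * u)) * Φ u) (Icc 0 T) := by
    refine monotoneOn_of_deriv_nonneg (convex_Icc 0 T) ?_ ?_ ?_
    · exact (continuousOn_integral_Icc hT (hω.intervalIntegrable_of_Icc hT)).sub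
        ((by fun_prop : Continuous fun u => Real.exp (-(K * u))).continuousOn.mul
          (continuousOn_integral_Icc hT (hφ.intervalIntegrable_of_Icc hT)))
    · rw [interior_Icc]
      exact fun u hu => (hderiv u hu).differentiableAt.differentiableWithinAt
    · rw [interior_Icc]
      intro u hu
      rw [(hderiv u hu).deriv]
      have hexp_le_one : Real.exp (-(K * u)) ≤ 1 :=
        Real.exp_le_one_iff.mpr (neg_nonpos.mpr (mul_nonneg hK hu.1.le))
      have hscaled := mul_le_mul_of_nonneg_left (h u (Ioo_subset_Icc_self hu)) (Real.exp_pos (-(K * u))).le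
      nlinarith [hω₀ u (Ioo_subset_Icc_self hu)]
  have hT' := hmono (left_mem_Icc.mpr hT) (right_mem_Icc.mpr hT) hT
  simp only [Ω, Φ, intervalIntegral.integral_same, mul_zero, sub_zero] at hT'
  rwa [sub_nonneg, Real.exp_neg, inv_mul_le_iff₀ (Real.exp_pos _)] at hT'

lemma le_add_mul_exp_mul_integral_of_le_mul_integral_add (hK : 0 ≤ K) (hT : 0 ≤ T)
    (hφ : ContinuousOn φ (Icc 0 T)) (hω : ContinuousOn ω (Icc 0 T))
    (hω₀ : ∀ u ∈ Icc 0 T, 0 ≤ ω u)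
    (h : ∀ u ∈ Icc 0 T, φ u ≤ K * (∫ s in (0:ℝ)..u, φ s) + ω u) :
    φ T ≤ ω T + K * Real.exp (K * T) * ∫ s in (0:ℝ)..T, ω s :=
  calc φ T ≤ K * (∫ s in (0:ℝ)..T, φ s) + ω T := h T (right_mem_Icc.mpr hT)
    _ ≤ K * (Real.exp (K * T) * ∫ s in (0:ℝ)..T, ω s) + ω T := by
      gcongr
      exact integral_le_exp_mul_integral_of_le_mul_integral_add hK hT hφ hω hω₀ h
    _ = ω T + K * Real.exp (K * T) * ∫ s in (0:ℝ)..T, ω s := by ring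

end Gronwall

section Trajectories

variable {F : ℝ → ℝ} {K : NNReal} {x₀ : ℝ} {f g y z : ℝ → ℝ}

lemma abs_sub_trajectories_le_mul_integral_add (hF : LipschitzWith K F) {u : ℝ} (hu : 0 ≤ u)
    (hf : IntervalIntegrable f volume 0 u) (hg : IntervalIntegrable g volume 0 u)
    (hy : ContinuousOn y (Icc 0 u)) (hz : ContinuousOn z (Icc 0 u))
    (hy_eq : y u = x₀ + ∫ s in (0:ℝ)..u, (F (y s) + f s))
    (hz_eq : z u = x₀ + ∫ s in (0:ℝ)..u, (F (z s) + g s)) :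
    |y u - z u| ≤ K * (∫ s in (0:ℝ)..u, |y s - z s|) + |∫ s in (0:ℝ)..u, (f s - g s)| := by
  have hFy : IntervalIntegrable (fun s => F (y s)) volume 0 u :=
    (hF.continuous.comp_continuousOn hy).intervalIntegrable_of_Icc hu
  have hFz : IntervalIntegrable (fun s => F (z s)) volume 0 u :=
    (hF.continuous.comp_continuousOn hz).intervalIntegrable_of_Icc hu
  have hsplit : y u - z u = (∫ s in (0:ℝ)..u, (F (y s) - F (z s))) + ∫ s in (0:ℝ)..u, (f s - g s) := by
    rw [hy_eq, hz_eq, intervalIntegral.integral_add hFy hf, intervalIntegral.integral_add hFz hg,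
      intervalIntegral.integral_sub hFy hFz, intervalIntegral.integral_sub hf hg]
    ring
  have hlip : |∫ s in (0:ℝ)..u, (F (y s) - F (z s))| ≤ K * ∫ s in (0:ℝ)..u, |y s - z s| := by
    rw [← intervalIntegral.integral_const_mul]
    refine (intervalIntegral.abs_integral_le_integral_abs hu).trans
      (intervalIntegral.integral_mono_on hu (hFy.sub hFz).abs
        ((continuousOn_const.mul (hy.sub hz).abs).intervalIntegrable_of_Icc hu) fun s _ => ?_)
    simpa only [Real.dist_eq] using hF.dist_le_mul (y s) (z s)
  rw [hsplit]
  exact (abs_add_le _ _).trans (by gcongr)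

lemma abs_sub_trajectories_le_gronwall (hF : LipschitzWith K F) {T : ℝ} (hT : 0 ≤ T)
    (hf : IntervalIntegrable f volume 0 T) (hg : IntervalIntegrable g volume 0 T)
    (hy : ContinuousOn y (Icc 0 T)) (hz : ContinuousOn z (Icc 0 T))
    (hy_eq : ∀ u ∈ Icc 0 T, y u = x₀ + ∫ s in (0:ℝ)..u, (F (y s) + f s))
    (hz_eq : ∀ u ∈ Icc 0 T, z u = x₀ + ∫ s in (0:ℝ)..u, (F (z s) + g s)) :
    |y T - z T| ≤ |∫ s in (0:ℝ)..T, (f s - g s)|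
      + K * Real.exp (K * T) * ∫ u in (0:ℝ)..T, |∫ s in (0:ℝ)..u, (f s - g s)| := by
  refine le_add_mul_exp_mul_integral_of_le_mul_integral_add K.coe_nonneg hT (hy.sub hz).abs
    (continuousOn_integral_Icc hT (hf.sub hg)).abs (fun _ _ => abs_nonneg _) fun u hu => ?_
  have hsub : uIcc 0 u ⊆ uIcc 0 T := uIcc_subset_uIcc_left (by rwa [uIcc_of_le hT])
  exact abs_sub_trajectories_le_mul_integral_add hF hu.1 (hf.mono_set hsub) (hg.mono_set hsub)
    (hy.mono (Icc_subset_Icc_right hu.2)) (hz.mono (Icc_subset_Icc_right hu.2)) (hy_eq u hu)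
    (hz_eq u hu)

end Trajectories

lemma intervalIntegrable_of_forall_integrableOn_Icc {f : ℝ → ℝ}
    (hf : ∀ T : ℝ, 0 < T → IntegrableOn f (Icc 0 T)) {u : ℝ} (hu : 0 ≤ u) :
    IntervalIntegrable f volume 0 u := by
  rcases hu.eq_or_lt with rfl | hu
  · exact IntervalIntegrable.refl
  · exact (intervalIntegrable_iff_integrableOn_Icc_of_le hu.le).mpr (hf u hu)

lemma abs_integral_sub_le_of_ae_mem_Icc {f g : ℝ → ℝ} {N T u : ℝ}
    (hf : ∀ᵐ s ∂volume.restrict (Icc 0 T), f s ∈ Icc 0 N)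
    (hg : ∀ᵐ s ∂volume.restrict (Icc 0 T), g s ∈ Icc 0 N) (hu : u ∈ Icc 0 T) :
    |∫ s in (0:ℝ)..u, (f s - g s)| ≤ N * u := by
  rw [ae_restrict_iff' measurableSet_Icc] at hf hg
  have hbound : ∀ᵐ s, s ∈ Ι (0:ℝ) u → ‖f s - g s‖ ≤ N := by
    filter_upwards [hf, hg] with s hfs hgs hs
    rw [uIoc_of_le hu.1] at hs
    have hsT : s ∈ Icc 0 T := ⟨hs.1.le, hs.2.trans hu.2⟩
    obtain ⟨hf₀, hfN⟩ := hfs hsT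
    obtain ⟨hg₀, hgN⟩ := hgs hsT
    rw [Real.norm_eq_abs, abs_le]
    constructor <;> linarith
  simpa only [Real.norm_eq_abs, sub_zero, abs_of_nonneg hu.1] using
    intervalIntegral.norm_integral_le_of_norm_le_const_ae hbound

lemma tendsto_integral_abs_of_tendsto_zero {ι : Type*} {l : Filter ι} [l.IsCountablyGenerated]
    {W : ι → ℝ → ℝ} {T C : ℝ} (hT : 0 ≤ T) (hW : ∀ i, ContinuousOn (W i) (Icc 0 T))
    (hbdd : ∀ᶠ i in l, ∀ u ∈ Icc 0 T, |W i u| ≤ C)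
    (hlim : ∀ u ∈ Ioc 0 T, Tendsto (fun i => W i u) l (𝓝 0)) :
    Tendsto (fun i => ∫ u in (0:ℝ)..T, |W i u|) l (𝓝 0) := by
  have hIoc : Ι (0:ℝ) T = Ioc 0 T := uIoc_of_le hT
  have h := intervalIntegral.tendsto_integral_filter_of_dominated_convergence (f := fun _ => 0)
    (fun _ => C)
    (Eventually.of_forall fun i => hIoc ▸
      ((hW i).abs.mono Ioc_subset_Icc_self).aestronglyMeasurable measurableSet_Ioc)
    (hbdd.mono fun i hi => ae_of_all _ fun u hu => by
      simpa only [Real.norm_eq_abs, abs_abs] using hi u (Ioc_subset_Icc_self (hIoc ▸ hu)))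
    (intervalIntegrable_const (μ := volume))
    (ae_of_all _ fun u hu => by simpa using (hlim u (hIoc ▸ hu)).abs)
  rwa [intervalIntegral.integral_zero] at h

lemma tendsto_integral_sub_of_tendsto_setIntegral {ι : Type*} {l : Filter ι}
    {v : ι → ℝ → ℝ} {w : ℝ → ℝ} {u : ℝ} (hu : 0 ≤ u)
    (hv : ∀ i, IntervalIntegrable (v i) volume 0 u) (hw : IntervalIntegrable w volume 0 u)
    (h : Tendsto (fun i => ∫ s in Icc 0 u, v i s) l (𝓝 (∫ s in Icc 0 u, w s))) :
    Tendsto (fun i => ∫ s in (0:ℝ)..u, (v i s - w s)) l (𝓝 0) := by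
  simp only [intervalIntegral.integral_sub (hv _) hw, intervalIntegral.integral_of_le hu,
    ← integral_Icc_eq_integral_Ioc]
  simpa using h.sub_const (∫ s in Icc 0 u, w s)

theorem trajectories_pointwise_convergence_general
    (b₀ : ℝ) (F : ℝ → ℝ) (hF : LipschitzWith (Real.toNNReal b₀) F)
    (x₀ : ℝ) (v : ℕ → ℝ → ℝ) (vl : ℝ → ℝ)
    (hv : ∀ n : ℕ, Measurable (v n) ∧ ∀ T : ℝ, 0 < T → IntegrableOn (v n) (Set.Icc 0 T))
    (hvl : Measurable vl ∧ ∀ T : ℝ, 0 < T → IntegrableOn vl (Set.Icc 0 T))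
    (hweak : ∀ T : ℝ, 0 < T → ∀ g : ℝ → ℝ, Measurable g →
      (∃ C : ℝ, ∀ t ∈ Set.Icc (0:ℝ) T, |g t| ≤ C) →
      Tendsto (fun n => ∫ t in Set.Icc (0:ℝ) T, v n t * g t) atTop
        (nhds (∫ t in Set.Icc (0:ℝ) T, vl t * g t)))
    (hbound : ∀ T : ℕ, ∃ NT : ℝ, 0 < NT ∧
      (∀ n : ℕ, T ≤ n →
        ∀ᵐ t ∂(volume.restrict (Set.Icc (0:ℝ) (T:ℝ))), 0 ≤ v n t ∧ v n t ≤ NT) ∧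
      (∀ᵐ t ∂(volume.restrict (Set.Icc (0:ℝ) (T:ℝ))), 0 ≤ vl t ∧ vl t ≤ NT))
    (xs : ℕ → ℝ → ℝ) (x : ℝ → ℝ)
    (hxs : ∀ n : ℕ, ContinuousOn (xs n) (Set.Ici 0) ∧
      ∀ t : ℝ, 0 ≤ t → xs n t = x₀ + ∫ s in (0:ℝ)..t, (F (xs n s) + v n s))
    (hx : ContinuousOn x (Set.Ici 0) ∧
      ∀ t : ℝ, 0 ≤ t → x t = x₀ + ∫ s in (0:ℝ)..t, (F (x s) + vl s)) :
    ∀ t : ℝ, 0 ≤ t → Tendsto (fun n => xs n t) atTop (nhds (x t)) := by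
  intro t ht
  have hvI n {u} : 0 ≤ u → IntervalIntegrable (v n) volume 0 u :=
    intervalIntegrable_of_forall_integrableOn_Icc (hv n).2
  have hvlI {u} : 0 ≤ u → IntervalIntegrable vl volume 0 u :=
    intervalIntegrable_of_forall_integrableOn_Icc hvl.2
  set W : ℕ → ℝ → ℝ := fun n u => ∫ s in (0:ℝ)..u, (v n s - vl s)
  have hW_lim : ∀ u ∈ Icc 0 t, Tendsto (W · u) atTop (𝓝 0) := by
    rintro u ⟨hu₀, -⟩
    rcases hu₀.eq_or_lt with rfl | hu
    · simp [W]
    · refine tendsto_integral_sub_of_tendsto_setIntegral hu₀ (fun n => hvI n hu₀) (hvlI hu₀) ?_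
      simpa using hweak u hu (fun _ => 1) measurable_const ⟨1, fun _ _ => by simp⟩
  obtain ⟨N, hN, hvN, hvlN⟩ := hbound ⌈t⌉₊
  have hW_bdd : ∀ᶠ n in atTop, ∀ u ∈ Icc 0 t, |W n u| ≤ N * t :=
    (eventually_ge_atTop ⌈t⌉₊).mono fun n hn u hu =>
      (abs_integral_sub_le_of_ae_mem_Icc (hvN n hn) hvlN ⟨hu.1, hu.2.trans (Nat.le_ceil t)⟩).trans
        (mul_le_mul_of_nonneg_left hu.2 hN.le)
  have hW_int := tendsto_integral_abs_of_tendsto_zero ht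
    (fun n => continuousOn_integral_Icc ht ((hvI n ht).sub (hvlI ht))) hW_bdd
    (fun u hu => hW_lim u (Ioc_subset_Icc_self hu))
  rw [tendsto_iff_dist_tendsto_zero]
  refine squeeze_zero (fun n => dist_nonneg) (fun n => (Real.dist_eq _ _).trans_le
    (abs_sub_trajectories_le_gronwall hF ht (hvI n ht) (hvlI ht)
      ((hxs n).1.mono Icc_subset_Ici_self) (hx.1.mono Icc_subset_Ici_self)
      (fun u hu => (hxs n).2 u hu.1) (fun u hu => hx.2 u hu.1))) ?_
  simpa using (hW_lim t ⟨ht, le_rfl⟩).abs.add (hW_int.const_mul _)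

/-- Pointwise convergence of trajectories associated with a locally uniformly
bounded sequence of controls converging weakly in every `L¹([0,T])`. -/
theorem trajectories_pointwise_convergence
    (b₀ : ℝ) (hb₀ : 0 < b₀) (F : ℝ → ℝ) (hF : LipschitzWith (Real.toNNReal b₀) F)
    (x₀ : ℝ) (v : ℕ → ℝ → ℝ) (vl : ℝ → ℝ)
    (hv : ∀ n : ℕ, Measurable (v n) ∧ ∀ T : ℝ, 0 < T → IntegrableOn (v n) (Set.Icc 0 T))
    (hvl : Measurable vl ∧ ∀ T : ℝ, 0 < T → IntegrableOn vl (Set.Icc 0 T))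
    (hweak : ∀ T : ℝ, 0 < T → ∀ g : ℝ → ℝ, Measurable g →
      (∃ C : ℝ, ∀ t ∈ Set.Icc (0:ℝ) T, |g t| ≤ C) →
      Tendsto (fun n => ∫ t in Set.Icc (0:ℝ) T, v n t * g t) atTop
        (nhds (∫ t in Set.Icc (0:ℝ) T, vl t * g t)))
    (hbound : ∀ T : ℕ, ∃ NT : ℝ, 0 < NT ∧
      (∀ n : ℕ, T ≤ n →
        ∀ᵐ t ∂(volume.restrict (Set.Icc (0:ℝ) (T:ℝ))), 0 ≤ v n t ∧ v n t ≤ NT) ∧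
      (∀ᵐ t ∂(volume.restrict (Set.Icc (0:ℝ) (T:ℝ))), 0 ≤ vl t ∧ vl t ≤ NT))
    (xs : ℕ → ℝ → ℝ) (x : ℝ → ℝ)
    (hxs : ∀ n : ℕ, ContinuousOn (xs n) (Set.Ici 0) ∧
      ∀ t : ℝ, 0 ≤ t → xs n t = x₀ + ∫ s in (0:ℝ)..t, (F (xs n s) + v n s))
    (hx : ContinuousOn x (Set.Ici 0) ∧
      ∀ t : ℝ, 0 ≤ t → x t = x₀ + ∫ s in (0:ℝ)..t, (F (x s) + vl s)) :
    ∀ t : ℝ, 0 ≤ t → Tendsto (fun n => xs n t) atTop (nhds (x t)) :=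
  trajectories_pointwise_convergence_general b₀ F hF x₀ v vl hv hvl hweak hbound xs x hxs hx
end

section
/- Let T > 0 and let v_n : [0,T] → (0,∞) (n ∈ ℕ) be measurable functions such that v_n and log v_n are integrable on [0,T]. Let v, f ∈ L¹([0,T]), and suppose v_n converges to v weakly in L¹([0,T]) and log v_n converges to f weakly in L¹([0,T]) (that is, ∫₀^T v_n g → ∫₀^T v g and ∫₀^T (log v_n) g → ∫₀^T f g for every bounded measurable g : [0,T] → ℝ). Then f(t) ≤ log v(t) for a.e. t ∈ [0,T] (in particular v(t) > 0 for a.e. t ∈ [0,T]). -/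
/-!
The logarithm is concave, so it lies below each of its tangents:
`log x ≤ log c + (x - c) / c` for all `c, x > 0`. Tested against indicators of sets, this
inequality for `vₙ` survives the weak limit and gives `f ≤ log c + (v - c) / c` a.e., for each
rational `c > 0` at once. The infimum of these tangents at `v(t)` is `log v(t)` when
`v(t) > 0` and `-∞` otherwise.
-/

open MeasureTheory Filter Topology

namespace Real

lemma log_le_log_add_sub_div {c x : ℝ} (hc : 0 < c) (hx : 0 < x) :
    log x ≤ log c + (x - c) / c := by
  have h := log_le_sub_one_of_pos (div_pos hx hc)
  rw [log_div hx.ne' hc.ne'] at h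
  rw [sub_div, div_self hc.ne']
  linarith

lemma le_log_of_forall_rat_le_tangent {a b : ℝ}
    (h : ∀ q : ℚ, 0 < q → a ≤ log q + (b - q) / q) : a ≤ log b ∧ 0 < b := by
  have hreal : ∀ c : ℝ, 0 < c → a ≤ log c + (b - c) / c := by
    intro c hc
    obtain ⟨u, -, hcu, hu⟩ := exists_seq_rat_strictAnti_tendsto c
    have hupos : ∀ n, (0 : ℚ) < u n := fun n => by exact_mod_cast hc.trans (hcu n)
    have hcont : ContinuousAt (fun y : ℝ => log y + (b - y) / y) c :=
      (continuousAt_log hc.ne').add ((continuousAt_const.sub continuousAt_id).div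
        continuousAt_id hc.ne')
    exact ge_of_tendsto' (hcont.tendsto.comp hu) fun n => h (u n) (hupos n)
  have hb : 0 < b := by
    by_contra! hb
    have h' := hreal (exp a) (exp_pos a)
    rw [log_exp, sub_div, div_self (exp_pos a).ne'] at h'
    linarith [div_nonpos_of_nonpos_of_nonneg hb (exp_pos a).le]
  exact ⟨by simpa using hreal b hb, hb⟩

end Real

variable {α : Type*} [MeasurableSpace α] {μ : Measure α}

lemma ae_nonneg_of_tendsto_setIntegral {h : ℕ → α → ℝ} {h' : α → ℝ}
    (hnonneg : ∀ n, ∀ᵐ x ∂μ, 0 ≤ h n x) (hint : Integrable h' μ)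
    (htendsto : ∀ s, MeasurableSet s →
      Tendsto (fun n => ∫ x in s, h n x ∂μ) atTop (𝓝 (∫ x in s, h' x ∂μ))) :
    ∀ᵐ x ∂μ, 0 ≤ h' x :=
  ae_nonneg_of_forall_setIntegral_nonneg hint fun s hs _ =>
    ge_of_tendsto' (htendsto s hs) fun n =>
      setIntegral_nonneg_of_ae_restrict (ae_restrict_of_ae (hnonneg n))

lemma tendsto_setIntegral_of_tendsto_integral_mul
    {S : Set α} {F : ℕ → α → ℝ} {G : α → ℝ}
    (h : ∀ g : α → ℝ, Measurable g → (∃ C : ℝ, ∀ x ∈ S, |g x| ≤ C) →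
      Tendsto (fun n => ∫ x in S, F n x * g x ∂μ) atTop (𝓝 (∫ x in S, G x * g x ∂μ)))
    {s : Set α} (hs : MeasurableSet s) :
    Tendsto (fun n => ∫ x in s, F n x ∂μ.restrict S) atTop
      (𝓝 (∫ x in s, G x ∂μ.restrict S)) := by
  have hind : ∀ φ : α → ℝ, (fun x => φ x * s.indicator 1 x) = s.indicator φ := by
    intro φ
    ext x; by_cases hx : x ∈ s <;> simp [hx]
  have := h (s.indicator 1) (measurable_const.indicator hs)
    ⟨1, fun x _ => by by_cases hx : x ∈ s <;> simp [hx]⟩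
  simpa only [hind, integral_indicator hs] using this

section WeakLimit

variable [IsFiniteMeasure μ] {v : ℕ → α → ℝ} {vl f : α → ℝ}

lemma tendsto_setIntegral_const_add_mul_sub_log (a b : ℝ)
    (hvint : ∀ n, Integrable (v n) μ)
    (hlogint : ∀ n, Integrable (fun x => Real.log (v n x)) μ)
    (hvlint : Integrable vl μ) (hfint : Integrable f μ)
    {s : Set α}
    (hv : Tendsto (fun n => ∫ x in s, v n x ∂μ) atTop (𝓝 (∫ x in s, vl x ∂μ)))
    (hlog : Tendsto (fun n => ∫ x in s, Real.log (v n x) ∂μ) atTop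
      (𝓝 (∫ x in s, f x ∂μ))) :
    Tendsto (fun n => ∫ x in s, (a + b * v n x - Real.log (v n x)) ∂μ) atTop
      (𝓝 (∫ x in s, (a + b * vl x - f x) ∂μ)) := by
  have hsplit : ∀ φ ψ : α → ℝ, Integrable φ μ → Integrable ψ μ →
      ∫ x in s, (a + b * φ x - ψ x) ∂μ =
        a * μ.real s + b * ∫ x in s, φ x ∂μ - ∫ x in s, ψ x ∂μ := by
    intro φ ψ hφ hψ
    rw [integral_sub (f := fun x => a + b * φ x)
        ((integrable_const a).add (hφ.const_mul b)).restrict hψ.restrict,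
      integral_add (f := fun _ => a) (integrable_const a).restrict (hφ.const_mul b).restrict,
      integral_const_mul,
      setIntegral_const, smul_eq_mul, mul_comm (μ.real s)]
  simp only [hsplit _ _ (hvint _) (hlogint _), hsplit _ _ hvlint hfint]
  exact (tendsto_const_nhds.add (hv.const_mul b)).sub hlog

lemma ae_le_log_tangent_of_weak_limit
    (hvpos : ∀ n, ∀ᵐ x ∂μ, 0 < v n x)
    (hvint : ∀ n, Integrable (v n) μ)
    (hlogint : ∀ n, Integrable (fun x => Real.log (v n x)) μ)
    (hvlint : Integrable vl μ) (hfint : Integrable f μ)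
    (hv : ∀ s, MeasurableSet s →
      Tendsto (fun n => ∫ x in s, v n x ∂μ) atTop (𝓝 (∫ x in s, vl x ∂μ)))
    (hlog : ∀ s, MeasurableSet s →
      Tendsto (fun n => ∫ x in s, Real.log (v n x) ∂μ) atTop (𝓝 (∫ x in s, f x ∂μ)))
    {c : ℝ} (hc : 0 < c) :
    ∀ᵐ x ∂μ, f x ≤ Real.log c + (vl x - c) / c := by
  have hgap := ae_nonneg_of_tendsto_setIntegral
    (h := fun n x => (Real.log c - 1) + c⁻¹ * v n x - Real.log (v n x))
    (h' := fun x => (Real.log c - 1) + c⁻¹ * vl x - f x)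
    (fun n => (hvpos n).mono fun x hx => by
      have := Real.log_le_log_add_sub_div hc hx
      rw [sub_div, div_self hc.ne', div_eq_inv_mul] at this
      linarith)
    (((integrable_const _).add (hvlint.const_mul _)).sub hfint)
    (fun s hs => tendsto_setIntegral_const_add_mul_sub_log _ _ hvint hlogint hvlint hfint (hv s hs)
      (hlog s hs))
  filter_upwards [hgap] with x hx
  rw [sub_div, div_self hc.ne', div_eq_inv_mul]
  linarith

theorem ae_le_log_of_weak_limit
    (hvpos : ∀ n, ∀ᵐ x ∂μ, 0 < v n x)
    (hvint : ∀ n, Integrable (v n) μ)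
    (hlogint : ∀ n, Integrable (fun x => Real.log (v n x)) μ)
    (hvlint : Integrable vl μ) (hfint : Integrable f μ)
    (hv : ∀ s, MeasurableSet s →
      Tendsto (fun n => ∫ x in s, v n x ∂μ) atTop (𝓝 (∫ x in s, vl x ∂μ)))
    (hlog : ∀ s, MeasurableSet s →
      Tendsto (fun n => ∫ x in s, Real.log (v n x) ∂μ) atTop (𝓝 (∫ x in s, f x ∂μ))) :
    ∀ᵐ x ∂μ, f x ≤ Real.log (vl x) ∧ 0 < vl x := by
  have htangents : ∀ᵐ x ∂μ, ∀ q : ℚ, 0 < q → f x ≤ Real.log q + (vl x - q) / q := by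
    refine ae_all_iff.2 fun q => ?_
    by_cases hq : 0 < q
    · filter_upwards [ae_le_log_tangent_of_weak_limit hvpos hvint hlogint hvlint hfint hv hlog
        (Rat.cast_pos.2 hq)] with x hx _ using hx
    · exact Eventually.of_forall fun x hq' => absurd hq' hq
  filter_upwards [htangents] with x hx using Real.le_log_of_forall_rat_le_tangent hx

end WeakLimit

theorem weak_limit_log_inequality_general
    (T : ℝ) (v : ℕ → ℝ → ℝ) (vl f : ℝ → ℝ)
    (hvpos : ∀ n : ℕ, ∀ t ∈ Set.Icc (0:ℝ) T, 0 < v n t)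
    (hvint : ∀ n : ℕ, IntegrableOn (v n) (Set.Icc 0 T))
    (hlogint : ∀ n : ℕ, IntegrableOn (fun t => Real.log (v n t)) (Set.Icc 0 T))
    (hvlint : IntegrableOn vl (Set.Icc 0 T))
    (hfint : IntegrableOn f (Set.Icc 0 T))
    (hweakv : ∀ g : ℝ → ℝ, Measurable g →
      (∃ C : ℝ, ∀ t ∈ Set.Icc (0:ℝ) T, |g t| ≤ C) →
      Tendsto (fun n => ∫ t in Set.Icc (0:ℝ) T, v n t * g t) atTop
        (nhds (∫ t in Set.Icc (0:ℝ) T, vl t * g t)))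
    (hweaklog : ∀ g : ℝ → ℝ, Measurable g →
      (∃ C : ℝ, ∀ t ∈ Set.Icc (0:ℝ) T, |g t| ≤ C) →
      Tendsto (fun n => ∫ t in Set.Icc (0:ℝ) T, Real.log (v n t) * g t) atTop
        (nhds (∫ t in Set.Icc (0:ℝ) T, f t * g t))) :
    ∀ᵐ t ∂(volume.restrict (Set.Icc (0:ℝ) T)), f t ≤ Real.log (vl t) ∧ 0 < vl t := by
  have : IsFiniteMeasure (volume.restrict (Set.Icc (0:ℝ) T)) := by
    rw [isFiniteMeasure_restrict]; exact measure_Icc_lt_top.ne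
  exact ae_le_log_of_weak_limit
    (fun n => (ae_restrict_mem measurableSet_Icc).mono (hvpos n))
    hvint hlogint hvlint hfint
    (fun _ hs => tendsto_setIntegral_of_tendsto_integral_mul hweakv hs)
    (fun _ hs => tendsto_setIntegral_of_tendsto_integral_mul hweaklog hs)

/-- If positive functions `v_n` converge weakly in `L¹([0,T])` to `v` and
`log v_n` converge weakly in `L¹([0,T])` to `f`, then `f ≤ log v` a.e.
(in particular `v > 0` a.e.). -/
theorem weak_limit_log_inequality
    (T : ℝ) (hT : 0 < T) (v : ℕ → ℝ → ℝ) (vl f : ℝ → ℝ)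
    (hvm : ∀ n : ℕ, Measurable (v n))
    (hvpos : ∀ n : ℕ, ∀ t ∈ Set.Icc (0:ℝ) T, 0 < v n t)
    (hvint : ∀ n : ℕ, IntegrableOn (v n) (Set.Icc 0 T))
    (hlogint : ∀ n : ℕ, IntegrableOn (fun t => Real.log (v n t)) (Set.Icc 0 T))
    (hvlint : IntegrableOn vl (Set.Icc 0 T))
    (hfint : IntegrableOn f (Set.Icc 0 T))
    (hweakv : ∀ g : ℝ → ℝ, Measurable g →
      (∃ C : ℝ, ∀ t ∈ Set.Icc (0:ℝ) T, |g t| ≤ C) →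
      Tendsto (fun n => ∫ t in Set.Icc (0:ℝ) T, v n t * g t) atTop
        (nhds (∫ t in Set.Icc (0:ℝ) T, vl t * g t)))
    (hweaklog : ∀ g : ℝ → ℝ, Measurable g →
      (∃ C : ℝ, ∀ t ∈ Set.Icc (0:ℝ) T, |g t| ≤ C) →
      Tendsto (fun n => ∫ t in Set.Icc (0:ℝ) T, Real.log (v n t) * g t) atTop
        (nhds (∫ t in Set.Icc (0:ℝ) T, f t * g t))) :
    ∀ᵐ t ∂(volume.restrict (Set.Icc (0:ℝ) T)), f t ≤ Real.log (vl t) ∧ 0 < vl t :=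
  weak_limit_log_inequality_general T v vl f hvpos hvint hlogint hvlint hfint hweakv hweaklog
end

section
/- Let T > 0 and let v_n (n ∈ ℕ) and v be integrable functions on [0,T] such that v_n converges to v weakly in L¹([0,T]), i.e. ∫₀^T v_n(t) g(t) dt → ∫₀^T v(t) g(t) dt for every bounded measurable g : [0,T] → ℝ. Then for a.e. t ∈ [0,T], liminf_{n→∞} v_n(t) ≤ v(t) ≤ limsup_{n→∞} v_n(t), where the liminf and limsup are taken in the extended reals. -/
/-!
Convergence of `∫ v_n g` for every bounded measurable `g` gives, in particular, convergence of
the integrals of `v_n` over every measurable set. If `limsup v_n < q < r < v` on a set of positive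
measure, then for some `N` the set `B` where `v > r` and `v_n < q` for all `n ≥ N` still has
positive measure, and `r |B| ≤ ∫_B v = lim ∫_B v_n ≤ q |B|` is absurd. Countably many rational
pairs `(q, r)` cover the set where `limsup v_n < v`; the `liminf` bound follows by applying this
to `-v_n` and `-v`.
-/

open MeasureTheory Filter Topology

section WeakLimit

variable {α : Type*} [MeasurableSpace α] {μ : Measure α} [IsFiniteMeasure μ]
  {f : ℕ → α → ℝ} {g : α → ℝ}

lemma measure_eq_zero_of_eventually_le_of_lt_le (hf : ∀ n, Integrable (f n) μ)
    (hg : Integrable g μ)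
    (h : ∀ s, MeasurableSet s →
      Tendsto (fun n => ∫ x in s, f n x ∂μ) atTop (𝓝 (∫ x in s, g x ∂μ)))
    {s : Set α} (hs : NullMeasurableSet s μ) {q r : ℝ} (hqr : q < r)
    (hfs : ∀ᶠ n in atTop, ∀ x ∈ s, f n x ≤ q) (hgs : ∀ x ∈ s, r ≤ g x) :
    μ s = 0 := by
  have hlim : Tendsto (fun n => ∫ x in s, f n x ∂μ) atTop (𝓝 (∫ x in s, g x ∂μ)) := by
    simpa only [setIntegral_congr_set hs.toMeasurable_ae_eq] using
      h _ (measurableSet_toMeasurable μ s)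
  have hupper : ∫ x in s, g x ∂μ ≤ μ.real s * q := by
    refine le_of_tendsto hlim (hfs.mono fun n hn => ?_)
    simpa only [setIntegral_const, smul_eq_mul] using
      setIntegral_mono_on₀ (hf n).integrableOn (integrableOn_const (measure_ne_top μ s)) hs hn
  have hlower : μ.real s * r ≤ ∫ x in s, g x ∂μ := by
    simpa only [setIntegral_const, smul_eq_mul] using
      setIntegral_mono_on₀ (integrableOn_const (measure_ne_top μ s)) hg.integrableOn hs hgs
  have : μ.real s ≤ 0 := by nlinarith [measureReal_nonneg (μ := μ) (s := s)]
  exact (measureReal_eq_zero_iff).1 (le_antisymm this measureReal_nonneg)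

lemma measure_limsup_lt_lt_eq_zero (hf : ∀ n, Integrable (f n) μ) (hg : Integrable g μ)
    (h : ∀ s, MeasurableSet s →
      Tendsto (fun n => ∫ x in s, f n x ∂μ) atTop (𝓝 (∫ x in s, g x ∂μ)))
    {q r : ℝ} (hqr : q < r) :
    μ {x | limsup (fun n => (f n x : EReal)) atTop < q ∧ r < g x} = 0 := by
  have hsub : {x | limsup (fun n => (f n x : EReal)) atTop < q ∧ r < g x} ⊆
      ⋃ N, {x | r < g x} ∩ ⋂ n ≥ N, {x | f n x < q} := by
    rintro x ⟨hL, hgx⟩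
    obtain ⟨N, hN⟩ := eventually_atTop.1 (eventually_lt_of_limsup_lt hL)
    simp only [Set.mem_iUnion, Set.mem_inter_iff, Set.mem_iInter, Set.mem_ofPred_eq]
    exact ⟨N, hgx, fun n hn => EReal.coe_lt_coe_iff.1 (hN n hn)⟩
  refine measure_mono_null hsub (measure_iUnion_null fun N => ?_)
  refine measure_eq_zero_of_eventually_le_of_lt_le hf hg h ?_ hqr ?_ fun x hx => hx.1.le
  · exact (nullMeasurableSet_lt aemeasurable_const hg.aemeasurable).inter
      (.iInter fun n => .iInter fun _ =>
        nullMeasurableSet_lt (hf n).aemeasurable aemeasurable_const)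
  · filter_upwards [eventually_ge_atTop N] with n hn x hx
    exact (Set.mem_iInter₂.1 hx.2 n hn).le

theorem ae_le_limsup_of_tendsto_setIntegral (hf : ∀ n, Integrable (f n) μ)
    (hg : Integrable g μ)
    (h : ∀ s, MeasurableSet s →
      Tendsto (fun n => ∫ x in s, f n x ∂μ) atTop (𝓝 (∫ x in s, g x ∂μ))) :
    ∀ᵐ x ∂μ, (g x : EReal) ≤ limsup (fun n => (f n x : EReal)) atTop := by
  rw [ae_iff]
  refine measure_mono_null ?_ (measure_iUnion_null fun q : ℚ =>
    measure_iUnion_null fun r : {r : ℚ // q < r} =>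
      measure_limsup_lt_lt_eq_zero hf hg h (Rat.cast_lt.2 r.2))
  intro x hx
  obtain ⟨q, hLq, hqg⟩ := EReal.exists_rat_btwn_of_lt (not_le.1 hx)
  obtain ⟨r, hqr, hrg⟩ := exists_rat_btwn (EReal.coe_lt_coe_iff.1 hqg)
  exact Set.mem_iUnion₂.2 ⟨q, ⟨r, Rat.cast_lt.1 hqr⟩, hLq, hrg⟩

theorem ae_liminf_le_of_tendsto_setIntegral (hf : ∀ n, Integrable (f n) μ)
    (hg : Integrable g μ)
    (h : ∀ s, MeasurableSet s →
      Tendsto (fun n => ∫ x in s, f n x ∂μ) atTop (𝓝 (∫ x in s, g x ∂μ))) :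
    ∀ᵐ x ∂μ, liminf (fun n => (f n x : EReal)) atTop ≤ g x := by
  have hneg := ae_le_limsup_of_tendsto_setIntegral (f := fun n x => -f n x) (g := fun x => -g x)
    (fun n => (hf n).neg) hg.neg fun s hs => by simpa only [integral_neg] using (h s hs).neg
  filter_upwards [hneg] with x hx
  have hcoe : (fun n => ((-f n x : ℝ) : EReal)) = -fun n => (f n x : EReal) :=
    funext fun n => EReal.coe_neg _
  rwa [hcoe, EReal.limsup_neg, EReal.coe_neg, EReal.neg_le_neg_iff] at hx

end WeakLimit

lemma integral_mul_indicator_one {α : Type*} [MeasurableSpace α] {μ : Measure α} (f : α → ℝ)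
    {s : Set α} (hs : MeasurableSet s) :
    ∫ x, f x * s.indicator 1 x ∂μ = ∫ x in s, f x ∂μ := by
  simp_rw [← Set.indicator_mul_right, Pi.one_apply, mul_one]
  exact integral_indicator hs

theorem weak_limit_between_liminf_limsup_general
    (T : ℝ) (v : ℕ → ℝ → ℝ) (vl : ℝ → ℝ)
    (hvint : ∀ n : ℕ, IntegrableOn (v n) (Set.Icc 0 T))
    (hvlint : IntegrableOn vl (Set.Icc 0 T))
    (hweak : ∀ g : ℝ → ℝ, Measurable g →
      (∃ C : ℝ, ∀ t ∈ Set.Icc (0:ℝ) T, |g t| ≤ C) →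
      Tendsto (fun n => ∫ t in Set.Icc (0:ℝ) T, v n t * g t) atTop
        (nhds (∫ t in Set.Icc (0:ℝ) T, vl t * g t))) :
    ∀ᵐ t ∂(volume.restrict (Set.Icc (0:ℝ) T)),
      liminf (fun n => (v n t : EReal)) atTop ≤ (vl t : EReal) ∧
      (vl t : EReal) ≤ limsup (fun n => (v n t : EReal)) atTop := by
  have hset : ∀ s, MeasurableSet s →
      Tendsto (fun n => ∫ t in s, v n t ∂volume.restrict (Set.Icc 0 T)) atTop
        (𝓝 (∫ t in s, vl t ∂volume.restrict (Set.Icc 0 T))) := by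
    intro s hs
    have hbdd : ∃ C : ℝ, ∀ t ∈ Set.Icc (0:ℝ) T, |s.indicator 1 t| ≤ C :=
      ⟨1, fun t _ => by by_cases ht : t ∈ s <;> simp [ht]⟩
    simpa only [integral_mul_indicator_one _ hs] using
      hweak _ (measurable_one.indicator hs) hbdd
  filter_upwards [ae_liminf_le_of_tendsto_setIntegral hvint hvlint hset,
    ae_le_limsup_of_tendsto_setIntegral hvint hvlint hset] with t hinf hsup
  exact ⟨hinf, hsup⟩

/-- A weak `L¹([0,T])` limit lies a.e. between the pointwise `liminf` and
`limsup` (taken in the extended reals) of the sequence. -/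
theorem weak_limit_between_liminf_limsup
    (T : ℝ) (hT : 0 < T) (v : ℕ → ℝ → ℝ) (vl : ℝ → ℝ)
    (hvint : ∀ n : ℕ, IntegrableOn (v n) (Set.Icc 0 T))
    (hvlint : IntegrableOn vl (Set.Icc 0 T))
    (hweak : ∀ g : ℝ → ℝ, Measurable g →
      (∃ C : ℝ, ∀ t ∈ Set.Icc (0:ℝ) T, |g t| ≤ C) →
      Tendsto (fun n => ∫ t in Set.Icc (0:ℝ) T, v n t * g t) atTop
        (nhds (∫ t in Set.Icc (0:ℝ) T, vl t * g t))) :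
    ∀ᵐ t ∂(volume.restrict (Set.Icc (0:ℝ) T)),
      liminf (fun n => (v n t : EReal)) atTop ≤ (vl t : EReal) ∧
      (vl t : EReal) ≤ limsup (fun n => (v n t : EReal)) atTop :=
  weak_limit_between_liminf_limsup_general T v vl hvint hvlint hweak
end

section
/- Let F : ℝ → ℝ be continuously differentiable, let u₁, u₂ : [0,∞) → ℝ be locally integrable, let t₀ ≥ 0, and let x₁, x₂ : [t₀,∞) → ℝ be continuous functions satisfying x_i(t) = x_i(t₀) + ∫_{t₀}^t (F(x_i(s)) + u_i(s)) ds for all t ≥ t₀ (i = 1,2). Define h : [t₀,∞) → ℝ by h(τ) = (F(x₁(τ)) − F(x₂(τ)))/(x₁(τ) − x₂(τ)) if x₁(τ) ≠ x₂(τ), and h(τ) = F'(x₁(τ)) if x₁(τ) = x₂(τ). Then h is continuous, and for every t ≥ t₀: x₁(t) − x₂(t) = exp(∫_{t₀}^t h(τ) dτ)·(x₁(t₀) − x₂(t₀)) + ∫_{t₀}^t exp(∫_s^t h(τ) dτ)·(u₁(s) − u₂(s)) ds. Moreover, if in addition −b₀ ≤ F'(y) ≤ 0 for all y ∈ ℝ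 for some b₀ > 0, then −b₀ ≤ h(τ) ≤ 0 for all τ ≥ t₀. -/
open MeasureTheory Set intervalIntegral Topology Filter

private lemma my_slope_integral {F : ℝ → ℝ} (hF : ContDiff ℝ 1 F) (a b : ℝ) :
    F b - F a = (∫ θ in (0:ℝ)..1, deriv F (a + θ * (b - a))) * (b - a) := by
  have hdc : Continuous (deriv F) := hF.continuous_deriv le_rfl
  have hline : Continuous (fun θ : ℝ => a + θ * (b - a)) := by continuity
  have hderiv : ∀ θ ∈ Set.uIcc (0:ℝ) 1,
      HasDerivAt (fun θ : ℝ => F (a + θ * (b - a)))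
        (deriv F (a + θ * (b - a)) * (b - a)) θ := by
    intro θ _
    have h1 : HasDerivAt (fun θ : ℝ => a + θ * (b - a)) (b - a) θ := by
      simpa using ((hasDerivAt_id θ).mul_const (b - a)).const_add a
    exact ((hF.differentiable one_ne_zero _).hasDerivAt).comp θ h1
  have := intervalIntegral.integral_eq_sub_of_hasDerivAt hderiv
    (((hdc.comp hline).mul continuous_const).intervalIntegrable 0 1)
  rw [intervalIntegral.integral_mul_const] at this
  simpa using this.symm

private lemma my_fubini_triangle {a b : ℝ} (hab : a ≤ b) {w q : ℝ → ℝ}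
    (hw : IntegrableOn w (Set.Icc a b)) (hq : ContinuousOn q (Set.Icc a b)) :
    ∫ r in a..b, (∫ s in r..b, q s) * w r = ∫ s in a..b, q s * ∫ r in a..s, w r := by
  have hqint : IntegrableOn q (Set.Icc a b) := hq.integrableOn_compact isCompact_Icc
  set μ := volume.restrict (Set.Ioc a b) with hμ
  have hwμ : Integrable w μ := hw.mono_set Set.Ioc_subset_Icc_self
  have hqμ : Integrable q μ := hqint.mono_set Set.Ioc_subset_Icc_self
  have hfun : (fun p : ℝ × ℝ => (if p.1 ≤ p.2 then q p.2 else 0) * w p.1)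
      = Set.indicator {p : ℝ × ℝ | p.1 ≤ p.2} (fun p => q p.2 * w p.1) := by
    funext p
    by_cases hc : p.1 ≤ p.2 <;> simp [Set.indicator_apply, hc]
  have hprod : Integrable (fun p : ℝ × ℝ => (if p.1 ≤ p.2 then q p.2 else 0) * w p.1)
      (μ.prod μ) := by
    rw [hfun]
    have h1 : Integrable (fun p : ℝ × ℝ => q p.2 * w p.1) (μ.prod μ) := by
      have h0 := hqμ.mul_prod hwμ
      have := h0.swap
      exact this
    exact h1.indicator (measurableSet_le measurable_fst measurable_snd)
  calc ∫ r in a..b, (∫ s in r..b, q s) * w r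
      = ∫ r, (∫ s, (if r ≤ s then q s else 0) ∂μ) * w r ∂μ := by
        rw [intervalIntegral.integral_of_le hab, hμ]
        refine setIntegral_congr_fun measurableSet_Ioc (fun r hr => ?_)
        congr 1
        have hset : Set.Ioc a b ∩ Set.Ici r = Set.Icc r b := by
          ext s
          simp only [Set.mem_inter_iff, Set.mem_Ioc, Set.mem_Ici, Set.mem_Icc]
          constructor
          · rintro ⟨⟨_, h2⟩, h3⟩; exact ⟨h3, h2⟩
          · rintro ⟨h1, h2⟩; exact ⟨⟨lt_of_lt_of_le hr.1 h1, h2⟩, h1⟩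
        have : (fun s => if r ≤ s then q s else 0) = Set.indicator (Set.Ici r) q := by
          funext s; by_cases hc : r ≤ s <;> simp [Set.indicator_apply, hc]
        rw [this, setIntegral_indicator measurableSet_Ici, hset,
          integral_Icc_eq_integral_Ioc, ← intervalIntegral.integral_of_le hr.2]
    _ = ∫ r, ∫ s, (if r ≤ s then q s else 0) * w r ∂μ ∂μ := by
        refine integral_congr_ae (Filter.Eventually.of_forall fun r => ?_)
        exact (MeasureTheory.integral_mul_const _ _).symm
    _ = ∫ s, ∫ r, (if r ≤ s then q s else 0) * w r ∂μ ∂μ := integral_integral_swap hprod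
    _ = ∫ s, q s * (∫ r in a..s, w r) ∂μ := by
        rw [hμ]
        refine setIntegral_congr_fun measurableSet_Ioc (fun s hs => ?_)
        have hset : Set.Ioc a b ∩ Set.Iic s = Set.Ioc a s := by
          ext r
          simp only [Set.mem_inter_iff, Set.mem_Ioc, Set.mem_Iic]
          constructor
          · rintro ⟨⟨h1, _⟩, h3⟩; exact ⟨h1, h3⟩
          · rintro ⟨h1, h2⟩; exact ⟨⟨h1, le_trans h2 hs.2⟩, h2⟩
        have : (fun r => (if r ≤ s then q s else 0) * w r)
            = Set.indicator (Set.Iic s) (fun r => q s * w r) := by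
          funext r; by_cases hc : r ≤ s <;> simp [Set.indicator_apply, hc]
        rw [this, setIntegral_indicator measurableSet_Iic, hset,
          MeasureTheory.integral_const_mul, ← intervalIntegral.integral_of_le hs.1.le]
    _ = ∫ s in a..b, q s * ∫ r in a..s, w r := (intervalIntegral.integral_of_le hab).symm

private lemma my_h_eq_G {F : ℝ → ℝ} (hF : ContDiff ℝ 1 F) {p c hτ : ℝ}
    (hdefτ : hτ = if p = c then deriv F p else (F p - F c) / (p - c)) :
    hτ = ∫ θ in (0:ℝ)..1, deriv F (c + θ * (p - c)) := by
  by_cases hc : p = c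
  · rw [hdefτ, if_pos hc, hc]
    simp
  · rw [hdefτ, if_neg hc]
    rw [my_slope_integral hF c p]
    rw [mul_div_assoc, div_self (sub_ne_zero.2 hc), mul_one]

private lemma my_G_bounds {F : ℝ → ℝ} (hF : ContDiff ℝ 1 F) {b₀ : ℝ}
    (hb : ∀ y : ℝ, -b₀ ≤ deriv F y ∧ deriv F y ≤ 0) (c p : ℝ) :
    -b₀ ≤ (∫ θ in (0:ℝ)..1, deriv F (c + θ * (p - c))) ∧
      (∫ θ in (0:ℝ)..1, deriv F (c + θ * (p - c))) ≤ 0 := by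
  have hdc : Continuous (deriv F) := hF.continuous_deriv le_rfl
  have hint : IntervalIntegrable (fun θ : ℝ => deriv F (c + θ * (p - c))) volume 0 1 :=
    (hdc.comp (by continuity)).intervalIntegrable 0 1
  constructor
  · have := intervalIntegral.integral_mono_on (by norm_num : (0:ℝ) ≤ 1)
      (_root_.intervalIntegrable_const (c := -b₀)) hint (fun θ _ => (hb _).1)
    simpa using this
  · have := intervalIntegral.integral_mono_on (by norm_num : (0:ℝ) ≤ 1)
      hint (_root_.intervalIntegrable_const (c := (0:ℝ))) (fun θ _ => (hb _).2)
    simpa using this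

set_option maxHeartbeats 1000000 in
/-- The variation-of-constants representation of the difference of two
trajectories, via the incremental quotient function `h`. -/
theorem difference_of_trajectories_formula
    (F : ℝ → ℝ) (hF : ContDiff ℝ 1 F)
    (u₁ u₂ : ℝ → ℝ)
    (hu₁ : Measurable u₁) (hu₂ : Measurable u₂)
    (hu₁loc : ∀ T : ℝ, 0 < T → IntegrableOn u₁ (Set.Icc 0 T))
    (hu₂loc : ∀ T : ℝ, 0 < T → IntegrableOn u₂ (Set.Icc 0 T))
    (t₀ : ℝ) (ht₀ : 0 ≤ t₀)
    (x₁ x₂ : ℝ → ℝ)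
    (hx₁ : ContinuousOn x₁ (Set.Ici t₀) ∧
      ∀ t : ℝ, t₀ ≤ t → x₁ t = x₁ t₀ + ∫ s in t₀..t, (F (x₁ s) + u₁ s))
    (hx₂ : ContinuousOn x₂ (Set.Ici t₀) ∧
      ∀ t : ℝ, t₀ ≤ t → x₂ t = x₂ t₀ + ∫ s in t₀..t, (F (x₂ s) + u₂ s))
    (h : ℝ → ℝ)
    (hdef : ∀ τ : ℝ, h τ = if x₁ τ = x₂ τ then deriv F (x₁ τ)
      else (F (x₁ τ) - F (x₂ τ)) / (x₁ τ - x₂ τ)) :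
    ContinuousOn h (Set.Ici t₀) ∧
    (∀ t : ℝ, t₀ ≤ t →
      x₁ t - x₂ t = Real.exp (∫ τ in t₀..t, h τ) * (x₁ t₀ - x₂ t₀) +
        ∫ s in t₀..t, Real.exp (∫ τ in s..t, h τ) * (u₁ s - u₂ s)) ∧
    (∀ b₀ : ℝ, 0 < b₀ → (∀ y : ℝ, -b₀ ≤ deriv F y ∧ deriv F y ≤ 0) →
      ∀ τ : ℝ, t₀ ≤ τ → -b₀ ≤ h τ ∧ h τ ≤ 0) := by
  obtain ⟨hx₁c, hx₁e⟩ := hx₁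
  obtain ⟨hx₂c, hx₂e⟩ := hx₂
  have hdc : Continuous (deriv F) := hF.continuous_deriv le_rfl
  have hG : ∀ τ, h τ = ∫ θ in (0:ℝ)..1, deriv F (x₂ τ + θ * (x₁ τ - x₂ τ)) :=
    fun τ => my_h_eq_G hF (hdef τ)
  have hlin : Continuous (fun q : (ℝ × ℝ) × ℝ => q.1.1 + q.2 * (q.1.2 - q.1.1)) :=
    (continuous_fst.comp continuous_fst).add
      (continuous_snd.mul ((continuous_snd.comp continuous_fst).sub
        (continuous_fst.comp continuous_fst)))
  have huc : Continuous
      (Function.uncurry fun (p : ℝ × ℝ) (θ : ℝ) => deriv F (p.1 + θ * (p.2 - p.1))) :=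
    hdc.comp hlin
  have hGc : Continuous (fun p : ℝ × ℝ =>
      ∫ θ in (0:ℝ)..1, deriv F (p.1 + θ * (p.2 - p.1))) :=
    intervalIntegral.continuous_parametric_intervalIntegral_of_continuous
      (μ := volume) huc continuous_const
  have hcont_h : ContinuousOn h (Set.Ici t₀) := by
    have h1 : ContinuousOn (fun τ => (x₂ τ, x₁ τ)) (Set.Ici t₀) := hx₂c.prodMk hx₁c
    exact (hGc.comp_continuousOn h1).congr fun τ _ => hG τ
  have hkey : ∀ τ, F (x₁ τ) - F (x₂ τ) = h τ * (x₁ τ - x₂ τ) := by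
    intro τ
    rw [hdef τ]
    by_cases hc : x₁ τ = x₂ τ
    · simp [hc]
    · rw [if_neg hc, div_mul_cancel₀ _ (sub_ne_zero.2 hc)]
  refine ⟨hcont_h, ?_, ?_⟩
  · -- main variation of constants formula
    intro t ht
    rcases ht.eq_or_lt with rfl | htlt
    · simp
    have h0t : 0 < t := lt_of_le_of_lt ht₀ htlt
    have hu₁t : IntegrableOn u₁ (Set.Icc t₀ t) :=
      (hu₁loc t h0t).mono_set (Set.Icc_subset_Icc ht₀ le_rfl)
    have hu₂t : IntegrableOn u₂ (Set.Icc t₀ t) :=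
      (hu₂loc t h0t).mono_set (Set.Icc_subset_Icc ht₀ le_rfl)
    have hvI : IntervalIntegrable (fun s => u₁ s - u₂ s) volume t₀ t :=
      (intervalIntegrable_iff_integrableOn_Icc_of_le ht).2 (hu₁t.sub hu₂t)
    have hsub : Set.Icc t₀ t ⊆ Set.Ici t₀ := Set.Icc_subset_Ici_self
    have hhcc : ContinuousOn h (Set.Icc t₀ t) := hcont_h.mono hsub
    have hycont : ContinuousOn (fun s => x₁ s - x₂ s) (Set.Icc t₀ t) :=
      (hx₁c.sub hx₂c).mono hsub
    have hhInt : ∀ a ∈ Set.Icc t₀ t, ∀ b ∈ Set.Icc t₀ t, IntervalIntegrable h volume a b :=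
      fun a ha b hb => (hhcc.mono (Set.uIcc_subset_Icc ha hb)).intervalIntegrable
    set K : ℝ → ℝ := fun s => Real.exp (-(∫ τ in t₀..s, h τ)) with hKdef
    have hHcont : ContinuousOn (fun s => ∫ τ in t₀..s, h τ) (Set.Icc t₀ t) := by
      have := intervalIntegral.continuousOn_primitive_interval (f := h) (a := t₀) (b := t)
        (μ := volume) (by rw [Set.uIcc_of_le ht]; exact hhcc.integrableOn_compact isCompact_Icc)
      rwa [Set.uIcc_of_le ht] at this
    have hKcont : ContinuousOn K (Set.Icc t₀ t) :=
      Real.continuous_exp.comp_continuousOn hHcont.neg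
    have hKderiv : ∀ s ∈ Set.Ioo t₀ t, HasDerivAt K (-(h s) * K s) s := by
      intro s hs
      have hcs : ContinuousAt h s := hcont_h.continuousAt (Ici_mem_nhds hs.1)
      have hmeas : StronglyMeasurableAtFilter h (𝓝 s) volume :=
        (hcont_h.mono Set.Ioi_subset_Ici_self).stronglyMeasurableAtFilter isOpen_Ioi s hs.1
      have hHd : HasDerivAt (fun r => ∫ τ in t₀..r, h τ) (h s) s :=
        intervalIntegral.integral_hasDerivAt_right
          (hhInt t₀ (Set.left_mem_Icc.2 ht) s ⟨hs.1.le, hs.2.le⟩) hmeas hcs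
      have := (hHd.neg).exp
      simpa [hKdef, mul_comm] using this
    have hFTC : ∀ r ∈ Set.Icc t₀ t, K t - K r = ∫ s in r..t, -(h s) * K s := by
      intro r hr
      have hint : IntervalIntegrable (fun s => -(h s) * K s) volume r t := by
        apply ContinuousOn.intervalIntegrable
        rw [Set.uIcc_of_le hr.2]
        exact ((hhcc.mono (Set.Icc_subset_Icc hr.1 le_rfl)).neg).mul
          (hKcont.mono (Set.Icc_subset_Icc hr.1 le_rfl))
      rw [intervalIntegral.integral_eq_sub_of_hasDeriv_right_of_le hr.2
        (hKcont.mono (Set.Icc_subset_Icc hr.1 le_rfl))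
        (fun s hs => (hKderiv s ⟨lt_of_le_of_lt hr.1 hs.1, hs.2⟩).hasDerivWithinAt) hint]
    set w : ℝ → ℝ := fun r => h r * (x₁ r - x₂ r) + (u₁ r - u₂ r) with hwdef
    have hwI : IntervalIntegrable w volume t₀ t := by
      apply IntervalIntegrable.add _ hvI
      apply ContinuousOn.intervalIntegrable
      rw [Set.uIcc_of_le ht]
      exact hhcc.mul hycont
    have hwIcc : IntegrableOn w (Set.Icc t₀ t) :=
      (intervalIntegrable_iff_integrableOn_Icc_of_le ht).1 hwI
    have hy : ∀ s ∈ Set.Icc t₀ t, x₁ s - x₂ s = (x₁ t₀ - x₂ t₀) + ∫ r in t₀..s, w r := by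
      intro s hs
      have hi₁ : IntervalIntegrable (fun r => F (x₁ r) + u₁ r) volume t₀ s := by
        apply IntervalIntegrable.add
        · apply ContinuousOn.intervalIntegrable
          rw [Set.uIcc_of_le hs.1]
          exact hF.continuous.comp_continuousOn
            (hx₁c.mono (Set.Icc_subset_Ici_self))
        · exact (intervalIntegrable_iff_integrableOn_Icc_of_le hs.1).2
            (hu₁t.mono_set (Set.Icc_subset_Icc le_rfl hs.2))
      have hi₂ : IntervalIntegrable (fun r => F (x₂ r) + u₂ r) volume t₀ s := by
        apply IntervalIntegrable.add
        · apply ContinuousOn.intervalIntegrable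
          rw [Set.uIcc_of_le hs.1]
          exact hF.continuous.comp_continuousOn
            (hx₂c.mono (Set.Icc_subset_Ici_self))
        · exact (intervalIntegrable_iff_integrableOn_Icc_of_le hs.1).2
            (hu₂t.mono_set (Set.Icc_subset_Icc le_rfl hs.2))
      have hsum : (∫ r in t₀..s, (F (x₁ r) + u₁ r)) - ∫ r in t₀..s, (F (x₂ r) + u₂ r)
          = ∫ r in t₀..s, w r := by
        rw [← intervalIntegral.integral_sub hi₁ hi₂]
        apply intervalIntegral.integral_congr
        intro r _
        have := hkey r
        simp only [hwdef]
        linarith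
      rw [hx₁e s hs.1, hx₂e s hs.1]
      linarith
    have hK0 : K t₀ = 1 := by simp [hKdef]
    -- Claim A
    have hKwI : IntervalIntegrable (fun r => K r * w r) volume t₀ t := by
      apply IntervalIntegrable.continuousOn_mul hwI
      rwa [Set.uIcc_of_le ht]
    have claimA : K t * (x₁ t - x₂ t)
        = (x₁ t₀ - x₂ t₀) + ∫ s in t₀..t, K s * (u₁ s - u₂ s) := by
      have e1 : K t * (x₁ t - x₂ t)
          = K t * (x₁ t₀ - x₂ t₀) + ∫ r in t₀..t, K t * w r := by
        rw [hy t (Set.right_mem_Icc.2 ht), mul_add, intervalIntegral.integral_const_mul]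
      have e2 : (∫ r in t₀..t, K t * w r)
          = (∫ r in t₀..t, K r * w r) + ∫ r in t₀..t, (K t - K r) * w r := by
        rw [← intervalIntegral.integral_add hKwI]
        · apply intervalIntegral.integral_congr
          intro r _; ring
        · apply IntervalIntegrable.continuousOn_mul hwI
          rw [Set.uIcc_of_le ht]
          exact continuousOn_const.sub hKcont
      have e3 : (∫ r in t₀..t, (K t - K r) * w r)
          = ∫ s in t₀..t, (-(h s) * K s) * ∫ r in t₀..s, w r := by
        rw [show (∫ r in t₀..t, (K t - K r) * w r)
            = ∫ r in t₀..t, (∫ s in r..t, -(h s) * K s) * w r from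
          intervalIntegral.integral_congr fun r hr => by
            rw [Set.uIcc_of_le ht] at hr
            rw [← hFTC r hr]]
        exact my_fubini_triangle ht hwIcc ((hhcc.neg).mul hKcont)
      have e4 : (∫ s in t₀..t, (-(h s) * K s) * ∫ r in t₀..s, w r)
          = ∫ s in t₀..t, (-(h s) * K s) * ((x₁ s - x₂ s) - (x₁ t₀ - x₂ t₀)) := by
        apply intervalIntegral.integral_congr
        intro s hs
        rw [Set.uIcc_of_le ht] at hs
        have h2 := hy s hs
        dsimp only
        rw [show (∫ r in t₀..s, w r) = (x₁ s - x₂ s) - (x₁ t₀ - x₂ t₀) from by linarith]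
      have e5 : K t * (x₁ t₀ - x₂ t₀)
          = (x₁ t₀ - x₂ t₀) + ∫ s in t₀..t, (-(h s) * K s) * (x₁ t₀ - x₂ t₀) := by
        rw [intervalIntegral.integral_mul_const, ← hFTC t₀ (Set.left_mem_Icc.2 ht), hK0]
        ring
      rw [e1, e2, e3, e4, e5]
      have hint1 : IntervalIntegrable
          (fun s => (-(h s) * K s) * (x₁ t₀ - x₂ t₀)) volume t₀ t := by
        apply ContinuousOn.intervalIntegrable
        rw [Set.uIcc_of_le ht]
        exact ((hhcc.neg).mul hKcont).mul continuousOn_const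
      have hint2 : IntervalIntegrable
          (fun s => (-(h s) * K s) * ((x₁ s - x₂ s) - (x₁ t₀ - x₂ t₀))) volume t₀ t := by
        apply ContinuousOn.intervalIntegrable
        rw [Set.uIcc_of_le ht]
        exact ((hhcc.neg).mul hKcont).mul (hycont.sub continuousOn_const)
      have hcomb : (∫ s in t₀..t, (-(h s) * K s) * (x₁ t₀ - x₂ t₀))
            + ((∫ s in t₀..t, K s * w s)
              + ∫ s in t₀..t, (-(h s) * K s) * ((x₁ s - x₂ s) - (x₁ t₀ - x₂ t₀)))
          = ∫ s in t₀..t, K s * (u₁ s - u₂ s) := by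
        rw [← intervalIntegral.integral_add hKwI hint2,
          ← intervalIntegral.integral_add hint1 (hKwI.add hint2)]
        apply intervalIntegral.integral_congr
        intro s _
        simp only [hwdef]
        ring
      linarith
    -- conclude
    have hsplit : ∀ s ∈ Set.Icc t₀ t,
        Real.exp (∫ τ in s..t, h τ) = Real.exp (∫ τ in t₀..t, h τ) * K s := by
      intro s hs
      have hadd : (∫ τ in t₀..s, h τ) + (∫ τ in s..t, h τ) = ∫ τ in t₀..t, h τ :=
        intervalIntegral.integral_add_adjacent_intervals
          (hhInt t₀ (Set.left_mem_Icc.2 ht) s hs)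
          (hhInt s hs t (Set.right_mem_Icc.2 ht))
      rw [hKdef]
      rw [← Real.exp_add]
      congr 1
      linarith
    have hE : Real.exp (∫ τ in t₀..t, h τ) * K t = 1 := by
      rw [hKdef, ← Real.exp_add]
      simp
    calc x₁ t - x₂ t
        = (Real.exp (∫ τ in t₀..t, h τ) * K t) * (x₁ t - x₂ t) := by rw [hE, one_mul]
      _ = Real.exp (∫ τ in t₀..t, h τ) * (K t * (x₁ t - x₂ t)) := by ring
      _ = Real.exp (∫ τ in t₀..t, h τ) * ((x₁ t₀ - x₂ t₀)
            + ∫ s in t₀..t, K s * (u₁ s - u₂ s)) := by rw [claimA]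
      _ = Real.exp (∫ τ in t₀..t, h τ) * (x₁ t₀ - x₂ t₀)
            + ∫ s in t₀..t, Real.exp (∫ τ in t₀..t, h τ) * (K s * (u₁ s - u₂ s)) := by
          rw [mul_add, intervalIntegral.integral_const_mul]
      _ = Real.exp (∫ τ in t₀..t, h τ) * (x₁ t₀ - x₂ t₀)
            + ∫ s in t₀..t, Real.exp (∫ τ in s..t, h τ) * (u₁ s - u₂ s) := by
          congr 1
          apply intervalIntegral.integral_congr
          intro s hs
          rw [Set.uIcc_of_le ht] at hs
          dsimp only
          rw [hsplit s hs]
          ring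
  · intro b₀ hb₀ hb τ hτ
    rw [hG τ]
    exact my_G_bounds hF hb _ _
end

section
/- Let b₀ > 0, b > 0, M > 0, and let F : ℝ → ℝ be continuously differentiable with F(0) = 0, −b₀ ≤ F'(y) ≤ 0 for all y ∈ ℝ, and F(y) ≤ −b·y + M for all y ≥ 0. Let x₀ ≥ 0, let u : [0,∞) → ℝ be locally integrable with u(t) ≥ 0 for a.e. t ≥ 0, and let x : [0,∞) → ℝ be continuous with x(t) = x₀ + ∫₀^t (F(x(s)) + u(s)) ds for all t ≥ 0. Then for every t ≥ 0: e^{-b₀t}·(x₀ + ∫₀^t e^{b₀s} u(s) ds) ≤ x(t) ≤ e^{-bt}·(x₀ + ∫₀^t e^{bs}(M + u(s)) ds). In particular x(t) ≥ 0 for all t ≥ 0. -/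
/-!
Multiplying by the integrating factor `e^{cs}` and integrating by parts (the trajectory is
absolutely continuous, with derivative `F ∘ x + u` almost everywhere) gives
`e^{ct} x(t) = x₀ + ∫₀ᵗ e^{cs} (c x(s) + F(x(s)) + u(s)) ds` for every `c`.
The trajectory stays nonnegative: after the last time it was `≥ 0`, `F(x) + u ≥ 0` because `F`
is antitone with `F 0 = 0`, so `x` could not have decreased. On `y ≥ 0` the hypotheses on `F`
give `0 ≤ b₀ y + F y` and `b y + F y ≤ M`, and the identity with `c = b₀` and `c = b` turns
these into the two bounds.
-/

open MeasureTheory Set Real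

theorem ContinuousOn.exists_last_nonneg {x : ℝ → ℝ} {a t : ℝ} (hat : a ≤ t)
    (hx : ContinuousOn x (Icc a t)) (ha : 0 ≤ x a) :
    ∃ τ ∈ Icc a t, 0 ≤ x τ ∧ ∀ s ∈ Ioc τ t, x s < 0 := by
  have hclosed : IsClosed (Icc a t ∩ x ⁻¹' Ici 0) :=
    hx.preimage_isClosed_of_isClosed isClosed_Icc isClosed_Ici
  obtain ⟨τ, ⟨hτ, hxτ⟩, hmax⟩ :=
    (isCompact_Icc.of_isClosed_subset hclosed inter_subset_left).exists_isGreatest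
      ⟨a, ⟨left_mem_Icc.2 hat, ha⟩⟩
  refine ⟨τ, hτ, hxτ, fun s hs => not_le.1 fun hxs => ?_⟩
  exact (hmax ⟨⟨hτ.1.trans hs.1.le, hs.2⟩, hxs⟩).not_gt hs.1

theorem nonneg_of_eq_add_integral {F u x : ℝ → ℝ} {x₀ t : ℝ} (hx₀ : 0 ≤ x₀)
    (hF : ∀ y ≤ 0, 0 ≤ F y) (hu : ∀ᵐ s ∂volume.restrict (Ici 0), 0 ≤ u s)
    (hxc : ContinuousOn x (Icc 0 t))
    (hint : IntervalIntegrable (fun s => F (x s) + u s) volume 0 t)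
    (hx : ∀ s ∈ Icc 0 t, x s = x₀ + ∫ r in (0:ℝ)..s, (F (x r) + u r)) :
    ∀ s ∈ Icc 0 t, 0 ≤ x s := by
  intro s hs
  have hint_sub : ∀ r ∈ Icc 0 t, IntervalIntegrable (fun s => F (x s) + u s) volume 0 r :=
    fun r hr => hint.mono_set (uIcc_subset_uIcc left_mem_uIcc (Icc_subset_uIcc hr))
  obtain ⟨τ, hτ, hxτ, hneg⟩ := (hxc.mono (Icc_subset_Icc_right hs.2)).exists_last_nonneg hs.1
    (by simpa [hx 0 ⟨le_rfl, hs.1.trans hs.2⟩] using hx₀)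
  have hτt : τ ∈ Icc 0 t := ⟨hτ.1, hτ.2.trans hs.2⟩
  have hincr : x s - x τ = ∫ r in τ..s, (F (x r) + u r) := by
    rw [hx s hs, hx τ hτt, add_sub_add_left_eq_sub,
      intervalIntegral.integral_interval_sub_left (hint_sub s hs) (hint_sub τ hτt)]
  have hpos : 0 ≤ ∫ r in τ..s, (F (x r) + u r) := by
    rw [intervalIntegral.integral_of_le hτ.2]
    refine setIntegral_nonneg_of_ae_restrict ?_
    filter_upwards [ae_restrict_of_ae_restrict_of_subset (fun r hr => hτ.1.trans hr.1.le) hu,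
      ae_restrict_mem measurableSet_Ioc] with r hur hr
    exact add_nonneg (hF _ (hneg r hr).le) hur
  linarith

theorem AbsolutelyContinuousOnInterval.integral_exp_mul_mul_add_deriv {X : ℝ → ℝ} {a b : ℝ}
    (hX : AbsolutelyContinuousOnInterval X a b) (c : ℝ) :
    ∫ s in a..b, exp (c * s) * (c * X s + deriv X s) = exp (c * b) * X b - exp (c * a) * X a := by
  have hexp : AbsolutelyContinuousOnInterval (fun s => exp (c * s)) a b :=
    ContDiffOn.absolutelyContinuousOnInterval (by fun_prop)
  rw [← hexp.integral_deriv_mul_eq_sub hX]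
  refine intervalIntegral.integral_congr fun s _ => ?_
  have hderiv : deriv (fun s => exp (c * s)) s = c * exp (c * s) := by
    simpa [mul_comm] using ((hasDerivAt_id s).const_mul c).exp.deriv
  simp only [hderiv]
  ring

theorem exp_mul_eq_add_integral_of_eq_add_integral {x g : ℝ → ℝ} {x₀ t : ℝ}
    (hg : IntervalIntegrable g volume 0 t)
    (hx : ∀ s ∈ uIcc 0 t, x s = x₀ + ∫ r in (0:ℝ)..s, g r) (c : ℝ) :
    exp (c * t) * x t = x₀ + ∫ s in (0:ℝ)..t, exp (c * s) * (c * x s + g s) := by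
  set X : ℝ → ℝ := fun s => x₀ + ∫ r in (0:ℝ)..s, g r
  have hX : AbsolutelyContinuousOnInterval X 0 t :=
    (ContDiffOn.absolutelyContinuousOnInterval contDiffOn_const).add
      (hg.absolutelyContinuousOnInterval_intervalIntegral left_mem_uIcc)
  have hderiv : ∀ᵐ s, s ∈ uIoc 0 t →
      exp (c * s) * (c * X s + deriv X s) = exp (c * s) * (c * x s + g s) := by
    filter_upwards [hg.ae_hasDerivAt_integral] with s hs hst
    have hst' := uIoc_subset_uIcc hst
    rw [show X s = x s from (hx s hst').symm, ((hs hst' 0 left_mem_uIcc).const_add x₀).deriv]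
  have hparts := hX.integral_exp_mul_mul_add_deriv c
  rw [intervalIntegral.integral_congr_ae hderiv] at hparts
  rw [hparts, hx t right_mem_uIcc]
  simp [X]

theorem exp_neg_mul_mul_add_integral_le {x g φ : ℝ → ℝ} {x₀ t c : ℝ} (ht : 0 ≤ t)
    (hg : IntervalIntegrable g volume 0 t) (hxc : ContinuousOn x (Icc 0 t))
    (hx : ∀ s ∈ Icc 0 t, x s = x₀ + ∫ r in (0:ℝ)..s, g r)
    (hφ : IntervalIntegrable φ volume 0 t) (hle : ∀ s ∈ Icc 0 t, φ s ≤ c * x s + g s) :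
    exp (-c * t) * (x₀ + ∫ s in (0:ℝ)..t, exp (c * s) * φ s) ≤ x t := by
  rw [← uIcc_of_le ht] at hxc hx
  rw [neg_mul, exp_neg, inv_mul_le_iff₀ (exp_pos _),
    exp_mul_eq_add_integral_of_eq_add_integral hg hx, add_le_add_iff_left]
  exact intervalIntegral.integral_mono_on ht (hφ.continuousOn_mul (by fun_prop))
    (((hxc.intervalIntegrable.const_mul c).add hg).continuousOn_mul (by fun_prop))
    fun s hs => mul_le_mul_of_nonneg_left (hle s hs) (exp_pos _).le

theorem le_exp_neg_mul_mul_add_integral {x g ψ : ℝ → ℝ} {x₀ t c : ℝ} (ht : 0 ≤ t)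
    (hg : IntervalIntegrable g volume 0 t) (hxc : ContinuousOn x (Icc 0 t))
    (hx : ∀ s ∈ Icc 0 t, x s = x₀ + ∫ r in (0:ℝ)..s, g r)
    (hψ : IntervalIntegrable ψ volume 0 t) (hle : ∀ s ∈ Icc 0 t, c * x s + g s ≤ ψ s) :
    x t ≤ exp (-c * t) * (x₀ + ∫ s in (0:ℝ)..t, exp (c * s) * ψ s) := by
  rw [← uIcc_of_le ht] at hxc hx
  rw [neg_mul, exp_neg, le_inv_mul_iff₀ (exp_pos _),
    exp_mul_eq_add_integral_of_eq_add_integral hg hx, add_le_add_iff_left]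
  exact intervalIntegral.integral_mono_on ht
    (((hxc.intervalIntegrable.const_mul c).add hg).continuousOn_mul (by fun_prop))
    (hψ.continuousOn_mul (by fun_prop))
    fun s hs => mul_le_mul_of_nonneg_left (hle s hs) (exp_pos _).le

theorem const_mul_add_nonneg_of_neg_le_deriv {F : ℝ → ℝ} {k y : ℝ} (hF : Differentiable ℝ F)
    (hF0 : F 0 = 0) (hF' : ∀ y, -k ≤ deriv F y) (hy : 0 ≤ y) : 0 ≤ k * y + F y := by
  have hmono : Monotone (fun y => k * y + F y) := by
    refine monotone_of_deriv_nonneg (by fun_prop) fun y => ?_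
    rw [deriv_fun_add (by fun_prop) (hF y), deriv_const_mul_field', deriv_id'']
    linarith [hF' y]
  simpa [hF0] using hmono hy

theorem trajectory_two_sided_bounds_general
    (b₀ b M : ℝ)
    (F : ℝ → ℝ) (hF : ContDiff ℝ 1 F) (hF0 : F 0 = 0)
    (hF' : ∀ y : ℝ, -b₀ ≤ deriv F y ∧ deriv F y ≤ 0)
    (hFlin : ∀ y : ℝ, 0 ≤ y → F y ≤ -b * y + M)
    (x₀ : ℝ) (hx₀ : 0 ≤ x₀)
    (u : ℝ → ℝ)
    (huloc : ∀ T : ℝ, 0 < T → IntegrableOn u (Set.Icc 0 T))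
    (hupos : ∀ᵐ t ∂(volume.restrict (Set.Ici (0:ℝ))), 0 ≤ u t)
    (x : ℝ → ℝ)
    (hx : ContinuousOn x (Set.Ici 0) ∧
      ∀ t : ℝ, 0 ≤ t → x t = x₀ + ∫ s in (0:ℝ)..t, (F (x s) + u s)) :
    ∀ t : ℝ, 0 ≤ t →
      Real.exp (-b₀ * t) * (x₀ + ∫ s in (0:ℝ)..t, Real.exp (b₀ * s) * u s) ≤ x t ∧
      x t ≤ Real.exp (-b * t) * (x₀ + ∫ s in (0:ℝ)..t, Real.exp (b * s) * (M + u s)) ∧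
      0 ≤ x t := by
  intro t ht
  obtain ⟨hxc, hxeq⟩ := hx
  replace hxc : ContinuousOn x (Icc 0 t) := hxc.mono Icc_subset_Ici_self
  replace hxeq : ∀ s ∈ Icc 0 t, x s = x₀ + ∫ r in (0:ℝ)..s, (F (x r) + u r) :=
    fun s hs => hxeq s hs.1
  have hFd : Differentiable ℝ F := hF.differentiable one_ne_zero
  have hu_int : IntervalIntegrable u volume 0 t := by
    rcases ht.eq_or_lt with rfl | htpos
    · exact IntervalIntegrable.refl
    · exact (intervalIntegrable_iff_integrableOn_Icc_of_le ht).2 (huloc t htpos)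
  have hg_int : IntervalIntegrable (fun s => F (x s) + u s) volume 0 t :=
    (hFd.continuous.comp_continuousOn (uIcc_of_le ht ▸ hxc)).intervalIntegrable.add hu_int
  have hx_nonneg : ∀ s ∈ Icc 0 t, 0 ≤ x s :=
    nonneg_of_eq_add_integral hx₀
      (fun y hy => hF0 ▸ antitone_of_deriv_nonpos hFd (fun y => (hF' y).2) hy)
      hupos hxc hg_int hxeq
  refine ⟨?_, ?_, hx_nonneg t ⟨ht, le_rfl⟩⟩
  · refine exp_neg_mul_mul_add_integral_le ht hg_int hxc hxeq hu_int fun s hs => ?_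
    linarith [const_mul_add_nonneg_of_neg_le_deriv hFd hF0 (fun y => (hF' y).1) (hx_nonneg s hs)]
  · refine le_exp_neg_mul_mul_add_integral ht hg_int hxc hxeq
      (intervalIntegrable_const.add hu_int) fun s hs => ?_
    linarith [hFlin (x s) (hx_nonneg s hs)]

/-- Two-sided exponential bounds for the trajectory; in particular the
trajectory is nonnegative. -/
theorem trajectory_two_sided_bounds
    (b₀ b M : ℝ) (hb₀ : 0 < b₀) (hb : 0 < b) (hM : 0 < M)
    (F : ℝ → ℝ) (hF : ContDiff ℝ 1 F) (hF0 : F 0 = 0)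
    (hF' : ∀ y : ℝ, -b₀ ≤ deriv F y ∧ deriv F y ≤ 0)
    (hFlin : ∀ y : ℝ, 0 ≤ y → F y ≤ -b * y + M)
    (x₀ : ℝ) (hx₀ : 0 ≤ x₀)
    (u : ℝ → ℝ) (hu : Measurable u)
    (huloc : ∀ T : ℝ, 0 < T → IntegrableOn u (Set.Icc 0 T))
    (hupos : ∀ᵐ t ∂(volume.restrict (Set.Ici (0:ℝ))), 0 ≤ u t)
    (x : ℝ → ℝ)
    (hx : ContinuousOn x (Set.Ici 0) ∧
      ∀ t : ℝ, 0 ≤ t → x t = x₀ + ∫ s in (0:ℝ)..t, (F (x s) + u s)) :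
    ∀ t : ℝ, 0 ≤ t →
      Real.exp (-b₀ * t) * (x₀ + ∫ s in (0:ℝ)..t, Real.exp (b₀ * s) * u s) ≤ x t ∧
      x t ≤ Real.exp (-b * t) * (x₀ + ∫ s in (0:ℝ)..t, Real.exp (b * s) * (M + u s)) ∧
      0 ≤ x t :=
  trajectory_two_sided_bounds_general b₀ b M F hF hF0 hF' hFlin x₀ hx₀ u huloc hupos x hx
end
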